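/- arXiv:2504.05630 — 6 statements merged into one kernel-verified Lean document; each statement's English description precedes it below -/
import Mathlib

section
/- Assume P(T_1 < T_2, T_1 < Tmax, T_1 < min(D_1, D_2)) > 0. For n ≥ 2 define the time-dependent concordance Ĉ_n = [Σ_{1≤i≠j≤n} 1{T_i < D_i}·1{S(T_i;Z_i) < S(T_i;Z_j)}·1{T_i < X_j}·1{T_i < Tmax}] / [Σ_{1≤i≠j≤n} 1{T_i < D_i}·1{T_i < X_j}·1{T_i < Tmax}]. Then, as n → ∞, Ĉ_n converges almost surely to P(S(T_1;Z_1) < S(T_1;Z_2), T_1 < T_2, T_1 < Tmax, T_1 < min(D_1,D_2)) / P(T_1 < T_2, T_1 < Tmax, T_1 < min(D_1,D_2)). -/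
open MeasureTheory ProbabilityTheory Filter
open scoped Classical

open Finset Topology

/-!
Up to the common factor `n²`, numerator and denominator of `Ĉₙ` are sums over the off-diagonal
pairs `i ≠ j` of bounded kernels `h(ζᵢ, ζⱼ)`, so it suffices to show that
`n⁻² ∑_{i ≠ j} h(ζᵢ, ζⱼ) → E h(ζ₀, ζ₁)` almost surely for every measurable kernel with values
in `[0, 1]`. After centring, two summands are uncorrelated unless their index pairs share an
index, so the second moment of the centred sum is `O(n³)`. Along the squares `n = k²` the
normalised errors therefore have summable second moments and tend to `0` almost surely, and
monotonicity of the nonnegative sums fills in the indices between consecutive squares.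
-/

theorem tendsto_nat_sqrt_atTop : Tendsto Nat.sqrt atTop atTop :=
  tendsto_atTop_atTop.2 fun N => ⟨N * N, fun _ hn => Nat.le_sqrt.2 hn⟩

theorem tendsto_div_sq_of_monotone_of_tendsto_sq {a : ℕ → ℝ} (ha : Monotone a)
    (ha0 : ∀ n, 0 ≤ a n) {μ : ℝ}
    (hsq : Tendsto (fun k : ℕ => a (k ^ 2) / ((k : ℝ) ^ 2) ^ 2) atTop (𝓝 μ)) :
    Tendsto (fun n : ℕ => a n / (n : ℝ) ^ 2) atTop (𝓝 μ) := by
  have hratio : Tendsto (fun k : ℕ => ((k : ℝ) / (k + 1)) ^ 4) atTop (𝓝 1) := by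
    simpa using (tendsto_natCast_div_add_atTop (1 : ℝ)).pow 4
  have hlower : Tendsto (fun k : ℕ => a (k ^ 2) / ((k : ℝ) + 1) ^ 4) atTop (𝓝 μ) := by
    refine (mul_one μ ▸ hsq.mul hratio).congr' ?_
    filter_upwards [eventually_ne_atTop 0] with k hk
    field_simp
  have hupper : Tendsto (fun k : ℕ => a ((k + 1) ^ 2) / (k : ℝ) ^ 4) atTop (𝓝 μ) := by
    have hshift : Tendsto (fun k : ℕ => a ((k + 1) ^ 2) / ((k : ℝ) + 1) ^ 4) atTop (𝓝 μ) :=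
      (hsq.comp (tendsto_add_atTop_nat 1)).congr fun k => by
        simp only [Function.comp_apply, Nat.cast_add, Nat.cast_one]; ring
    refine (mul_one μ ▸ hshift.mul (inv_one (G := ℝ) ▸ hratio.inv₀ one_ne_zero)).congr' ?_
    filter_upwards [eventually_ne_atTop 0] with k hk
    field_simp
  refine tendsto_of_tendsto_of_tendsto_of_le_of_le' (hlower.comp tendsto_nat_sqrt_atTop)
    (hupper.comp tendsto_nat_sqrt_atTop) ?_ ?_
  all_goals
    filter_upwards [eventually_ne_atTop 0] with n hn
    have hs : 0 < Nat.sqrt n := Nat.sqrt_pos.2 (Nat.pos_of_ne_zero hn)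
    have hlo : ((Nat.sqrt n : ℝ)) ^ 2 ≤ n := by exact_mod_cast Nat.sqrt_le' n
    have hhi : (n : ℝ) < ((Nat.sqrt n : ℝ) + 1) ^ 2 := by exact_mod_cast Nat.lt_succ_sqrt' n
    simp only [Function.comp_apply]
  · refine div_le_div₀ (ha0 n) (ha (Nat.sqrt_le' n)) (by positivity) ?_
    nlinarith
  · refine div_le_div₀ (ha0 _) (ha (Nat.lt_succ_sqrt' n).le) (by positivity) ?_
    nlinarith

theorem ae_tendsto_zero_of_summable_integral_sq {Ω : Type*} [MeasurableSpace Ω] {P : Measure Ω}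
    {Y : ℕ → Ω → ℝ} (hint : ∀ k, Integrable (fun ω => Y k ω ^ 2) P)
    (hsum : Summable fun k => ∫ ω, Y k ω ^ 2 ∂P) :
    ∀ᵐ ω ∂P, Tendsto (fun k => Y k ω) atTop (𝓝 0) := by
  set F : ℕ → Ω → ENNReal := fun k ω => ENNReal.ofReal (Y k ω ^ 2)
  have hF : ∀ k, AEMeasurable (F k) P := fun k => (hint k).aemeasurable.ennreal_ofReal
  have hlint : ∫⁻ ω, ∑' k, F k ω ∂P ≠ ⊤ := by
    have hF_int : ∀ k, ∫⁻ ω, F k ω ∂P = ENNReal.ofReal (∫ ω, Y k ω ^ 2 ∂P) := fun k =>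
      (ofReal_integral_eq_lintegral_ofReal (hint k) (ae_of_all _ fun ω => sq_nonneg _)).symm
    rw [lintegral_tsum hF, tsum_congr hF_int, ← ENNReal.ofReal_tsum_of_nonneg
      (fun k => integral_nonneg fun ω => sq_nonneg _) hsum]
    exact ENNReal.ofReal_ne_top
  filter_upwards [ae_lt_top' (AEMeasurable.tsum hF) hlint] with ω hω
  have hsq : Tendsto (fun k => Y k ω ^ 2) atTop (𝓝 0) := by
    have := (ENNReal.tendsto_toReal ENNReal.zero_ne_top).comp
      (ENNReal.tendsto_atTop_zero_of_tsum_ne_top hω.ne)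
    exact this.congr fun k => ENNReal.toReal_ofReal (sq_nonneg _)
  rw [tendsto_zero_iff_abs_tendsto_zero]
  simpa [Function.comp_def, Real.sqrt_sq_eq_abs] using (Real.continuous_sqrt.tendsto 0).comp hsq

theorem integral_sq_sum_le_sum_card_filter {Ω ι : Type*} [MeasurableSpace Ω] {P : Measure Ω}
    [IsProbabilityMeasure P] (s : Finset ι) {t : ι → Ω → ℝ} (R : ι → ι → Prop)
    (ht : ∀ p, AEStronglyMeasurable (t p) P) (hbound : ∀ p ω, |t p ω| ≤ 1)
    (horth : ∀ p ∈ s, ∀ q ∈ s, ¬ R p q → ∫ ω, t p ω * t q ω ∂P = 0) :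
    ∫ ω, (∑ p ∈ s, t p ω) ^ 2 ∂P ≤ ∑ p ∈ s, (#{q ∈ s | R p q} : ℝ) := by
  have hprod : ∀ p q ω, |t p ω * t q ω| ≤ 1 := fun p q ω => by
    rw [abs_mul]; exact mul_le_one₀ (hbound p ω) (abs_nonneg _) (hbound q ω)
  have hint : ∀ p q, Integrable (fun ω => t p ω * t q ω) P := fun p q =>
    .of_bound ((ht p).mul (ht q)) 1 (ae_of_all _ (hprod p q))
  have hterm : ∀ p ∈ s, ∀ q ∈ s, ∫ ω, t p ω * t q ω ∂P ≤ if R p q then 1 else 0 := by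
    intro p hp q hq
    split_ifs with hpq
    · calc ∫ ω, t p ω * t q ω ∂P ≤ ∫ _, (1 : ℝ) ∂P :=
            integral_mono (hint p q) (integrable_const 1) fun ω =>
              (le_abs_self _).trans (hprod p q ω)
        _ = 1 := by simp
    · exact (horth p hp q hq hpq).le
  calc ∫ ω, (∑ p ∈ s, t p ω) ^ 2 ∂P = ∑ p ∈ s, ∑ q ∈ s, ∫ ω, t p ω * t q ω ∂P := by
        simp_rw [sq, sum_mul_sum]
        rw [integral_finsetSum _ fun p _ => integrable_finsetSum _ fun q _ => hint p q]
        exact sum_congr rfl fun p _ => integral_finsetSum _ fun q _ => hint p q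
    _ ≤ ∑ p ∈ s, ∑ q ∈ s, if R p q then (1 : ℝ) else 0 :=
        sum_le_sum fun p hp => sum_le_sum fun q hq => hterm p hp q hq
    _ = ∑ p ∈ s, (#{q ∈ s | R p q} : ℝ) := by simp only [sum_boole]

def SharesIndex {α : Type*} (p q : α × α) : Prop :=
  p.1 = q.1 ∨ p.1 = q.2 ∨ p.2 = q.1 ∨ p.2 = q.2

theorem card_filter_sharesIndex_le {α : Type*} [DecidableEq α] (s : Finset α) (p : α × α) :
    #{q ∈ s.offDiag | SharesIndex p q} ≤ 4 * #s := by
  have hsub : {q ∈ s.offDiag | SharesIndex p q} ⊆ ({p.1, p.2} ×ˢ s) ∪ (s ×ˢ {p.1, p.2}) := by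
    intro q hq
    rw [mem_filter, mem_offDiag] at hq
    simp only [SharesIndex, mem_union, mem_product, mem_insert, mem_singleton] at hq ⊢
    grind
  calc #{q ∈ s.offDiag | SharesIndex p q} ≤ #({p.1, p.2} ×ˢ s) + #(s ×ˢ {p.1, p.2}) :=
        (card_le_card hsub).trans (card_union_le _ _)
    _ ≤ 2 * #s + #s * 2 := by
        rw [card_product, card_product]
        gcongr <;> exact card_le_two
    _ = 4 * #s := by ring

def offDiagSum {α : Type*} (h : α → α → ℝ) (x : ℕ → α) (n : ℕ) : ℝ :=
  ∑ p ∈ (range n).offDiag, h (x p.1) (x p.2)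

section OffDiagSum

variable {α : Type*} {h : α → α → ℝ} {x : ℕ → α}

theorem offDiagSum_sub_const (c : ℝ) (n : ℕ) :
    offDiagSum (fun a b => h a b - c) x n = offDiagSum h x n - ((n : ℝ) ^ 2 - n) * c := by
  simp only [offDiagSum, sum_sub_distrib, sum_const, offDiag_card, card_range, nsmul_eq_mul]
  rw [Nat.cast_sub (Nat.le_mul_self n)]
  push_cast
  ring

theorem offDiagSum_nonneg (h0 : ∀ a b, 0 ≤ h a b) (n : ℕ) : 0 ≤ offDiagSum h x n :=
  sum_nonneg fun _ _ => h0 _ _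

theorem monotone_offDiagSum (h0 : ∀ a b, 0 ≤ h a b) : Monotone (offDiagSum h x) :=
  fun _ _ hmn => sum_le_sum_of_subset_of_nonneg (offDiag_mono (range_subset_range.2 hmn))
    fun _ _ _ => h0 _ _

theorem card_offDiag_range_le (n : ℕ) : (#(range n).offDiag : ℝ) ≤ (n : ℝ) ^ 2 := by
  rw [offDiag_card, card_range, sq]
  exact_mod_cast Nat.sub_le _ _

theorem abs_offDiagSum_le (hh : ∀ a b, |h a b| ≤ 1) (n : ℕ) : |offDiagSum h x n| ≤ (n : ℝ) ^ 2 :=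
  calc |offDiagSum h x n| ≤ ∑ p ∈ (range n).offDiag, |h (x p.1) (x p.2)| := abs_sum_le_sum_abs _ _
    _ ≤ ∑ _p ∈ (range n).offDiag, (1 : ℝ) := sum_le_sum fun p _ => hh _ _
    _ = #(range n).offDiag := by rw [sum_const, nsmul_one]
    _ ≤ (n : ℝ) ^ 2 := card_offDiag_range_le n

end OffDiagSum

theorem abs_sub_integral_le_one {Ω : Type*} [MeasurableSpace Ω] {P : Measure Ω}
    [IsProbabilityMeasure P] {f : Ω → ℝ} (hf : ∀ ω, f ω ∈ Set.Icc (0 : ℝ) 1) {c : ℝ}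
    (hc : c ∈ Set.Icc (0 : ℝ) 1) : |c - ∫ ω, f ω ∂P| ≤ 1 := by
  have hf0 : 0 ≤ ∫ ω, f ω ∂P := integral_nonneg fun ω => (hf ω).1
  have hf1 : ∫ ω, f ω ∂P ≤ 1 := by
    simpa using integral_mono_of_nonneg (ae_of_all P fun ω => (hf ω).1)
      (integrable_const (1 : ℝ)) (ae_of_all _ fun ω => (hf ω).2)
  exact abs_sub_le_iff.2 ⟨by linarith [hc.2], by linarith [hc.1]⟩

section UStatistic

variable {Ω α : Type*} [MeasurableSpace Ω] {P : Measure Ω} [IsProbabilityMeasure P]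
  [MeasurableSpace α] {ζ : ℕ → Ω → α}

theorem map_prodMk_eq_prod_of_ne (hmeas : ∀ i, Measurable (ζ i))
    (hident : ∀ i, P.map (ζ i) = P.map (ζ 0)) (hindep : iIndepFun ζ P) {i j : ℕ} (hij : i ≠ j) :
    P.map (fun ω => (ζ i ω, ζ j ω)) = (P.map (ζ 0)).prod (P.map (ζ 0)) := by
  rw [(indepFun_iff_map_prod_eq_prod_map_map (hmeas i).aemeasurable
    (hmeas j).aemeasurable).1 (hindep.indepFun hij), hident i, hident j]

theorem integral_comp_prodMk_eq_of_ne (hmeas : ∀ i, Measurable (ζ i))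
    (hident : ∀ i, P.map (ζ i) = P.map (ζ 0)) (hindep : iIndepFun ζ P) {h : α → α → ℝ}
    (hh : Measurable (Function.uncurry h)) {i j : ℕ} (hij : i ≠ j) :
    ∫ ω, h (ζ i ω) (ζ j ω) ∂P = ∫ ω, h (ζ 0 ω) (ζ 1 ω) ∂P := by
  have hpair : ∀ {k l : ℕ}, k ≠ l →
      ∫ ω, h (ζ k ω) (ζ l ω) ∂P = ∫ q, Function.uncurry h q ∂(P.map (ζ 0)).prod (P.map (ζ 0)) :=
    fun hkl => by
      rw [← map_prodMk_eq_prod_of_ne hmeas hident hindep hkl,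
        integral_map ((hmeas _).prodMk (hmeas _)).aemeasurable hh.aestronglyMeasurable]
      rfl
  rw [hpair hij, hpair zero_ne_one]

theorem measurable_offDiagSum (hmeas : ∀ i, Measurable (ζ i)) {h : α → α → ℝ}
    (hh : Measurable (Function.uncurry h)) (n : ℕ) :
    Measurable fun ω => offDiagSum h (ζ · ω) n :=
  Finset.measurable_fun_sum _ fun p _ => hh.comp ((hmeas p.1).prodMk (hmeas p.2))

theorem integral_sq_offDiagSum_sub_le (hmeas : ∀ i, Measurable (ζ i))
    (hident : ∀ i, P.map (ζ i) = P.map (ζ 0)) (hindep : iIndepFun ζ P) {h : α → α → ℝ}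
    (hh : Measurable (Function.uncurry h)) (h01 : ∀ a b, h a b ∈ Set.Icc (0 : ℝ) 1) (n : ℕ) :
    ∫ ω, offDiagSum (fun a b => h a b - ∫ ω, h (ζ 0 ω) (ζ 1 ω) ∂P) (ζ · ω) n ^ 2 ∂P
      ≤ 4 * (n : ℝ) ^ 3 := by
  set μ := ∫ ω, h (ζ 0 ω) (ζ 1 ω) ∂P
  set G : α × α → ℝ := fun a => h a.1 a.2 - μ
  have hG : Measurable G := hh.sub measurable_const
  have hGp : ∀ p : ℕ × ℕ, Measurable fun ω => G (ζ p.1 ω, ζ p.2 ω) :=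
    fun p => hG.comp ((hmeas p.1).prodMk (hmeas p.2))
  have hcentered : ∀ p ∈ (range n).offDiag, ∫ ω, G (ζ p.1 ω, ζ p.2 ω) ∂P = 0 := by
    intro p hp
    have hint : Integrable (fun ω => h (ζ p.1 ω) (ζ p.2 ω)) P :=
      .of_bound (hh.comp ((hmeas p.1).prodMk (hmeas p.2))).aestronglyMeasurable 1
        (ae_of_all _ fun ω => by
          rw [Real.norm_eq_abs, abs_le]
          constructor <;> linarith [(h01 (ζ p.1 ω) (ζ p.2 ω)).1, (h01 (ζ p.1 ω) (ζ p.2 ω)).2])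
    rw [integral_sub hint (integrable_const μ),
      integral_comp_prodMk_eq_of_ne hmeas hident hindep hh (mem_offDiag.1 hp).2.2]
    simp [μ]
  have horth : ∀ p ∈ (range n).offDiag, ∀ q ∈ (range n).offDiag, ¬ SharesIndex p q →
      ∫ ω, G (ζ p.1 ω, ζ p.2 ω) * G (ζ q.1 ω, ζ q.2 ω) ∂P = 0 := by
    intro p hp q _ hpq
    simp only [SharesIndex, not_or] at hpq
    obtain ⟨h11, h12, h21, h22⟩ := hpq
    have hind := (hindep.indepFun_prodMk_prodMk hmeas _ _ _ _ h11 h12 h21 h22).comp hG hG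
    simpa [Function.comp_def, hcentered p hp] using hind.integral_fun_mul_eq_mul_integral
      (hGp p).aestronglyMeasurable (hGp q).aestronglyMeasurable
  calc _ ≤ ∑ p ∈ (range n).offDiag, (#{q ∈ (range n).offDiag | SharesIndex p q} : ℝ) :=
        integral_sq_sum_le_sum_card_filter _ SharesIndex (fun p => (hGp p).aestronglyMeasurable)
          (fun p ω => abs_sub_integral_le_one (fun ω => h01 _ _) (h01 _ _)) horth
    _ ≤ ∑ p ∈ (range n).offDiag, (4 * n : ℝ) := sum_le_sum fun p _ => by
        exact_mod_cast (card_filter_sharesIndex_le _ p).trans_eq (by rw [card_range])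
    _ ≤ 4 * (n : ℝ) ^ 3 := by
        rw [sum_const, nsmul_eq_mul]
        nlinarith [card_offDiag_range_le n, (Nat.cast_nonneg n : (0 : ℝ) ≤ n)]

theorem ae_tendsto_offDiagSum_div_sq (hmeas : ∀ i, Measurable (ζ i))
    (hident : ∀ i, P.map (ζ i) = P.map (ζ 0)) (hindep : iIndepFun ζ P) {h : α → α → ℝ}
    (hh : Measurable (Function.uncurry h)) (h01 : ∀ a b, h a b ∈ Set.Icc (0 : ℝ) 1) :
    ∀ᵐ ω ∂P, Tendsto (fun n : ℕ => offDiagSum h (ζ · ω) n / (n : ℝ) ^ 2) atTop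
      (𝓝 (∫ ω, h (ζ 0 ω) (ζ 1 ω) ∂P)) := by
  set μ := ∫ ω, h (ζ 0 ω) (ζ 1 ω) ∂P
  have hbound : ∀ a b, |h a b - μ| ≤ 1 := fun a b =>
    abs_sub_integral_le_one (fun ω => h01 (ζ 0 ω) (ζ 1 ω)) (h01 a b)
  set Y : ℕ → Ω → ℝ := fun k ω =>
    offDiagSum (fun a b => h a b - μ) (ζ · ω) (k ^ 2) / ((k : ℝ) ^ 2) ^ 2
  have hY_abs : ∀ k ω, |Y k ω| ≤ 1 := fun k ω => by
    rw [abs_div, abs_of_nonneg (by positivity : (0 : ℝ) ≤ ((k : ℝ) ^ 2) ^ 2)]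
    exact div_le_one_of_le₀ (by exact_mod_cast abs_offDiagSum_le hbound (k ^ 2)) (by positivity)
  have hY_int : ∀ k, Integrable (fun ω => Y k ω ^ 2) P := fun k =>
    .of_bound ((((measurable_offDiagSum (h := fun a b => h a b - μ) hmeas
      (hh.sub measurable_const) _).div_const _).pow_const 2).aestronglyMeasurable) 1
      (ae_of_all _ fun ω => by
        rw [Real.norm_eq_abs, abs_pow]
        exact pow_le_one₀ (abs_nonneg _) (hY_abs k ω))
  have hY_sq : ∀ k : ℕ, ∫ ω, Y k ω ^ 2 ∂P ≤ 4 * ((k : ℝ) ^ 2)⁻¹ := fun k => by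
    calc ∫ ω, Y k ω ^ 2 ∂P
        = (∫ ω, offDiagSum (fun a b => h a b - μ) (ζ · ω) (k ^ 2) ^ 2 ∂P) /
            (((k : ℝ) ^ 2) ^ 2) ^ 2 := by
          simp only [Y, div_pow, integral_div]
      _ ≤ 4 * ((k ^ 2 : ℕ) : ℝ) ^ 3 / (((k : ℝ) ^ 2) ^ 2) ^ 2 := by
          gcongr
          exact integral_sq_offDiagSum_sub_le hmeas hident hindep hh h01 _
      _ = 4 * ((k : ℝ) ^ 2)⁻¹ := by
          rcases eq_or_ne (k : ℝ) 0 with hk | hk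
          · simp [hk]
          · field_simp
            push_cast
            ring
  have hY := ae_tendsto_zero_of_summable_integral_sq hY_int <|
    .of_nonneg_of_le (fun k => integral_nonneg fun ω => sq_nonneg _) hY_sq
      ((Real.summable_nat_pow_inv.2 one_lt_two).mul_left 4)
  have hdrift : Tendsto (fun k : ℕ => μ - μ * ((k : ℝ) ^ 2)⁻¹) atTop (𝓝 μ) := by
    simpa using tendsto_const_nhds.sub ((tendsto_inv_atTop_zero.comp
      ((tendsto_pow_atTop two_ne_zero).comp tendsto_natCast_atTop_atTop)).const_mul μ)
  filter_upwards [hY] with ω hω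
  have h0 : ∀ a b, 0 ≤ h a b := fun a b => (h01 a b).1
  refine tendsto_div_sq_of_monotone_of_tendsto_sq (monotone_offDiagSum h0) (offDiagSum_nonneg h0)
    ((zero_add μ ▸ hω.add hdrift).congr' ?_)
  filter_upwards [eventually_ne_atTop 0] with k hk
  simp only [Y, offDiagSum_sub_const]
  field_simp
  push_cast
  ring

theorem ae_tendsto_offDiagSum_div_offDiagSum (hmeas : ∀ i, Measurable (ζ i))
    (hident : ∀ i, P.map (ζ i) = P.map (ζ 0)) (hindep : iIndepFun ζ P) {h g : α → α → ℝ}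
    (hh : Measurable (Function.uncurry h)) (h01 : ∀ a b, h a b ∈ Set.Icc (0 : ℝ) 1)
    (hg : Measurable (Function.uncurry g)) (g01 : ∀ a b, g a b ∈ Set.Icc (0 : ℝ) 1)
    (hg0 : ∫ ω, g (ζ 0 ω) (ζ 1 ω) ∂P ≠ 0) :
    ∀ᵐ ω ∂P, Tendsto (fun n => offDiagSum h (ζ · ω) n / offDiagSum g (ζ · ω) n) atTop
      (𝓝 ((∫ ω, h (ζ 0 ω) (ζ 1 ω) ∂P) / ∫ ω, g (ζ 0 ω) (ζ 1 ω) ∂P)) := by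
  filter_upwards [ae_tendsto_offDiagSum_div_sq hmeas hident hindep hh h01,
    ae_tendsto_offDiagSum_div_sq hmeas hident hindep hg g01] with ω hω_h hω_g
  refine (hω_h.div hω_g hg0).congr' ?_
  filter_upwards [eventually_ne_atTop 0] with n hn
  exact div_div_div_cancel_right₀ (by positivity) _ _

end UStatistic

theorem sum_sum_ite_ne_and {α M : Type*} [DecidableEq α] [AddCommMonoid M] (s : Finset α)
    (p : α → α → Prop) [DecidableRel p] (f : α → α → M) :
    ∑ i ∈ s, ∑ j ∈ s, (if i ≠ j ∧ p i j then f i j else 0) =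
      ∑ q ∈ s.offDiag, if p q.1 q.2 then f q.1 q.2 else 0 := by
  have hoff : s.offDiag = (s ×ˢ s).filter fun q => q.1 ≠ q.2 := by
    ext; simp [and_assoc]
  rw [hoff, sum_filter, sum_product]
  simp only [ite_and]

theorem integral_ite_one_zero {Ω : Type*} [MeasurableSpace Ω] {P : Measure Ω} {p : Ω → Prop}
    [DecidablePred p] (hp : MeasurableSet {ω | p ω}) :
    ∫ ω, (if p ω then (1 : ℝ) else 0) ∂P = P.real {ω | p ω} := by
  rw [← integral_indicator_one hp]
  refine integral_congr_ae (ae_of_all _ fun ω => ?_)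
  rw [Set.indicator_apply]
  congr

section Concordance

variable {E : Type*}

/- Both indicators read `x = (Zᵢ, Tᵢ, Dᵢ)` and `y = (Zⱼ, Tⱼ, Dⱼ)`. -/
noncomputable def comparablePairIndicator (Tmax : ℝ) (x y : E × ℝ × ℝ) : ℝ :=
  if x.2.1 < x.2.2 ∧ x.2.1 < min y.2.1 y.2.2 ∧ x.2.1 < Tmax then 1 else 0

noncomputable def concordantPairIndicator (S : ℝ → E → ℝ) (Tmax : ℝ) (x y : E × ℝ × ℝ) : ℝ :=
  if x.2.1 < x.2.2 ∧ S x.2.1 x.1 < S x.2.1 y.1 ∧ x.2.1 < min y.2.1 y.2.2 ∧ x.2.1 < Tmax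
  then 1 else 0

theorem measurableSet_comparablePair [MeasurableSpace E] (Tmax : ℝ) :
    MeasurableSet {p : (E × ℝ × ℝ) × (E × ℝ × ℝ) |
      p.1.2.1 < p.1.2.2 ∧ p.1.2.1 < min p.2.2.1 p.2.2.2 ∧ p.1.2.1 < Tmax} := by
  measurability

theorem measurableSet_concordantPair [MeasurableSpace E] {S : ℝ → E → ℝ}
    (hS : Measurable fun p : ℝ × E => S p.1 p.2) (Tmax : ℝ) :
    MeasurableSet {p : (E × ℝ × ℝ) × (E × ℝ × ℝ) | p.1.2.1 < p.1.2.2 ∧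
      S p.1.2.1 p.1.1 < S p.1.2.1 p.2.1 ∧ p.1.2.1 < min p.2.2.1 p.2.2.2 ∧ p.1.2.1 < Tmax} := by
  have hT : Measurable fun p : (E × ℝ × ℝ) × (E × ℝ × ℝ) => p.1.2.1 := by fun_prop
  have hS₁ : Measurable fun p : (E × ℝ × ℝ) × (E × ℝ × ℝ) => S p.1.2.1 p.1.1 :=
    hS.comp (hT.prodMk (by fun_prop))
  have hS₂ : Measurable fun p : (E × ℝ × ℝ) × (E × ℝ × ℝ) => S p.1.2.1 p.2.1 :=
    hS.comp (hT.prodMk (by fun_prop))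
  exact (measurableSet_lt hT (by fun_prop)).inter ((measurableSet_lt hS₁ hS₂).inter
    ((measurableSet_lt hT (by fun_prop)).inter (measurableSet_lt hT measurable_const)))

theorem measurable_comparablePairIndicator [MeasurableSpace E] (Tmax : ℝ) :
    Measurable (Function.uncurry (comparablePairIndicator (E := E) Tmax)) :=
  Measurable.ite (measurableSet_comparablePair Tmax) measurable_const measurable_const

theorem measurable_concordantPairIndicator [MeasurableSpace E] {S : ℝ → E → ℝ}
    (hS : Measurable fun p : ℝ × E => S p.1 p.2) (Tmax : ℝ) :
    Measurable (Function.uncurry (concordantPairIndicator S Tmax)) :=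
  Measurable.ite (measurableSet_concordantPair hS Tmax) measurable_const measurable_const

theorem comparablePairIndicator_mem_Icc (Tmax : ℝ) (x y : E × ℝ × ℝ) :
    comparablePairIndicator Tmax x y ∈ Set.Icc (0 : ℝ) 1 := by
  unfold comparablePairIndicator
  split_ifs <;> simp

theorem concordantPairIndicator_mem_Icc (S : ℝ → E → ℝ) (Tmax : ℝ) (x y : E × ℝ × ℝ) :
    concordantPairIndicator S Tmax x y ∈ Set.Icc (0 : ℝ) 1 := by
  unfold concordantPairIndicator
  split_ifs <;> simp

theorem integral_comparablePairIndicator {Ω : Type*} [MeasurableSpace Ω] [MeasurableSpace E]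
    {P : Measure Ω} (Tmax : ℝ) {X Y : Ω → E × ℝ × ℝ} (hX : Measurable X) (hY : Measurable Y) :
    ∫ ω, comparablePairIndicator Tmax (X ω) (Y ω) ∂P =
      P.real {ω | (X ω).2.1 < (Y ω).2.1 ∧ (X ω).2.1 < Tmax ∧
        (X ω).2.1 < min (X ω).2.2 (Y ω).2.2} :=
  calc ∫ ω, comparablePairIndicator Tmax (X ω) (Y ω) ∂P
      = P.real {ω | (X ω).2.1 < (X ω).2.2 ∧ (X ω).2.1 < min (Y ω).2.1 (Y ω).2.2 ∧
          (X ω).2.1 < Tmax} :=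
        integral_ite_one_zero (hX.prodMk hY (measurableSet_comparablePair Tmax))
    _ = _ := by
        congr 1 with ω
        simp only [Set.mem_ofPred_eq, lt_min_iff]
        tauto

theorem integral_concordantPairIndicator {Ω : Type*} [MeasurableSpace Ω] [MeasurableSpace E]
    {P : Measure Ω} {S : ℝ → E → ℝ} (hS : Measurable fun p : ℝ × E => S p.1 p.2) (Tmax : ℝ)
    {X Y : Ω → E × ℝ × ℝ} (hX : Measurable X) (hY : Measurable Y) :
    ∫ ω, concordantPairIndicator S Tmax (X ω) (Y ω) ∂P =
      P.real {ω | S (X ω).2.1 (X ω).1 < S (X ω).2.1 (Y ω).1 ∧ (X ω).2.1 < (Y ω).2.1 ∧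
        (X ω).2.1 < Tmax ∧ (X ω).2.1 < min (X ω).2.2 (Y ω).2.2} :=
  calc ∫ ω, concordantPairIndicator S Tmax (X ω) (Y ω) ∂P
      = P.real {ω | (X ω).2.1 < (X ω).2.2 ∧ S (X ω).2.1 (X ω).1 < S (X ω).2.1 (Y ω).1 ∧
          (X ω).2.1 < min (Y ω).2.1 (Y ω).2.2 ∧ (X ω).2.1 < Tmax} :=
        integral_ite_one_zero (hX.prodMk hY (measurableSet_concordantPair hS Tmax))
    _ = _ := by
        congr 1 with ω
        simp only [Set.mem_ofPred_eq, lt_min_iff]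
        tauto

end Concordance

theorem stmt_0_general {Ω : Type*} [MeasurableSpace Ω] (P : Measure Ω) [IsProbabilityMeasure P]
    {E : Type*} [MeasurableSpace E]
    (S : ℝ → E → ℝ) (hSmeas : Measurable fun p : ℝ × E => S p.1 p.2)
    (Tmax : ℝ)
    (ζ : ℕ → Ω → E × ℝ × ℝ)
    (hmeas : ∀ i, Measurable (ζ i))
    (hident : ∀ i, P.map (ζ i) = P.map (ζ 0))
    (hindep : iIndepFun ζ P)
    (hpos : 0 < P {ω | (ζ 0 ω).2.1 < (ζ 1 ω).2.1 ∧ (ζ 0 ω).2.1 < Tmax ∧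
        (ζ 0 ω).2.1 < min ((ζ 0 ω).2.2) ((ζ 1 ω).2.2)}) :
    ∀ᵐ ω ∂P, Tendsto (fun n =>
        (∑ i ∈ Finset.range n, ∑ j ∈ Finset.range n,
          if i ≠ j ∧ (ζ i ω).2.1 < (ζ i ω).2.2 ∧
              S ((ζ i ω).2.1) ((ζ i ω).1) < S ((ζ i ω).2.1) ((ζ j ω).1) ∧
              (ζ i ω).2.1 < min ((ζ j ω).2.1) ((ζ j ω).2.2) ∧ (ζ i ω).2.1 < Tmax
            then (1 : ℝ) else 0) /
        (∑ i ∈ Finset.range n, ∑ j ∈ Finset.range n,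
          if i ≠ j ∧ (ζ i ω).2.1 < (ζ i ω).2.2 ∧
              (ζ i ω).2.1 < min ((ζ j ω).2.1) ((ζ j ω).2.2) ∧ (ζ i ω).2.1 < Tmax
            then (1 : ℝ) else 0))
      atTop (nhds
        ((P {ω | S ((ζ 0 ω).2.1) ((ζ 0 ω).1) < S ((ζ 0 ω).2.1) ((ζ 1 ω).1) ∧
              (ζ 0 ω).2.1 < (ζ 1 ω).2.1 ∧ (ζ 0 ω).2.1 < Tmax ∧
              (ζ 0 ω).2.1 < min ((ζ 0 ω).2.2) ((ζ 1 ω).2.2)}).toReal /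
         (P {ω | (ζ 0 ω).2.1 < (ζ 1 ω).2.1 ∧ (ζ 0 ω).2.1 < Tmax ∧
              (ζ 0 ω).2.1 < min ((ζ 0 ω).2.2) ((ζ 1 ω).2.2)}).toReal)) := by
  have hlim := ae_tendsto_offDiagSum_div_offDiagSum hmeas hident hindep
    (measurable_concordantPairIndicator hSmeas Tmax) (concordantPairIndicator_mem_Icc S Tmax)
    (measurable_comparablePairIndicator Tmax) (comparablePairIndicator_mem_Icc Tmax)
    (by
      rw [integral_comparablePairIndicator Tmax (hmeas 0) (hmeas 1)]
      exact (ENNReal.toReal_pos hpos.ne' (measure_ne_top _ _)).ne')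
  rw [integral_concordantPairIndicator hSmeas Tmax (hmeas 0) (hmeas 1),
    integral_comparablePairIndicator Tmax (hmeas 0) (hmeas 1)] at hlim
  filter_upwards [hlim] with ω hω
  simp only [sum_sum_ite_ne_and]
  exact hω

/-- **Convergence of the time-dependent concordance (Antolini's C).**
Work on a probability space `(Ω, P)`. `ζ i = (Zᵢ, Tᵢ, Dᵢ)` is an i.i.d. sequence of
(covariate, event time, censoring time) triples, with `D₁` independent of `(Z₁, T₁)`,
`S` a fixed measurable predicted survival curve with values in `[0,1]`, and `Tmax > 0`
the truncation time.  Assuming `P(T₁ < T₂, T₁ < Tmax, T₁ < min(D₁,D₂)) > 0`, the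
time-dependent concordance `Ĉₙ` converges almost surely to
`P(S(T₁;Z₁) < S(T₁;Z₂), T₁ < T₂, T₁ < Tmax, T₁ < min(D₁,D₂)) /
 P(T₁ < T₂, T₁ < Tmax, T₁ < min(D₁,D₂))`. -/
theorem stmt_0 {Ω : Type*} [MeasurableSpace Ω] (P : Measure Ω) [IsProbabilityMeasure P]
    {E : Type*} [MeasurableSpace E]
    (S : ℝ → E → ℝ) (hSmeas : Measurable fun p : ℝ × E => S p.1 p.2)
    (hS01 : ∀ t z, S t z ∈ Set.Icc (0 : ℝ) 1)
    (Tmax : ℝ) (hTmax : 0 < Tmax)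
    (ζ : ℕ → Ω → E × ℝ × ℝ)
    (hmeas : ∀ i, Measurable (ζ i))
    (hident : ∀ i, P.map (ζ i) = P.map (ζ 0))
    (hindep : iIndepFun ζ P)
    (hTnonneg : ∀ i ω, 0 ≤ (ζ i ω).2.1) (hDnonneg : ∀ i ω, 0 ≤ (ζ i ω).2.2)
    (hDindep : IndepFun (fun ω => ((ζ 0 ω).1, (ζ 0 ω).2.1)) (fun ω => (ζ 0 ω).2.2) P)
    (hpos : 0 < P {ω | (ζ 0 ω).2.1 < (ζ 1 ω).2.1 ∧ (ζ 0 ω).2.1 < Tmax ∧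
        (ζ 0 ω).2.1 < min ((ζ 0 ω).2.2) ((ζ 1 ω).2.2)}) :
    ∀ᵐ ω ∂P, Tendsto (fun n =>
        (∑ i ∈ Finset.range n, ∑ j ∈ Finset.range n,
          if i ≠ j ∧ (ζ i ω).2.1 < (ζ i ω).2.2 ∧
              S ((ζ i ω).2.1) ((ζ i ω).1) < S ((ζ i ω).2.1) ((ζ j ω).1) ∧
              (ζ i ω).2.1 < min ((ζ j ω).2.1) ((ζ j ω).2.2) ∧ (ζ i ω).2.1 < Tmax
            then (1 : ℝ) else 0) /
        (∑ i ∈ Finset.range n, ∑ j ∈ Finset.range n,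
          if i ≠ j ∧ (ζ i ω).2.1 < (ζ i ω).2.2 ∧
              (ζ i ω).2.1 < min ((ζ j ω).2.1) ((ζ j ω).2.2) ∧ (ζ i ω).2.1 < Tmax
            then (1 : ℝ) else 0))
      atTop (nhds
        ((P {ω | S ((ζ 0 ω).2.1) ((ζ 0 ω).1) < S ((ζ 0 ω).2.1) ((ζ 1 ω).1) ∧
              (ζ 0 ω).2.1 < (ζ 1 ω).2.1 ∧ (ζ 0 ω).2.1 < Tmax ∧
              (ζ 0 ω).2.1 < min ((ζ 0 ω).2.2) ((ζ 1 ω).2.2)}).toReal /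
         (P {ω | (ζ 0 ω).2.1 < (ζ 1 ω).2.1 ∧ (ζ 0 ω).2.1 < Tmax ∧
              (ζ 0 ω).2.1 < min ((ζ 0 ω).2.2) ((ζ 1 ω).2.2)}).toReal)) :=
  stmt_0_general P S hSmeas Tmax ζ hmeas hident hindep hpos
end

section
/- Let ε > 0 and suppose all event times T_i take values in [0, Tmax). Write x_i = (Z_i, T_i, D_i) and, for g ∈ 𝒢_ε, define the kernel ψ^g(x_i, x_j) = 1{T_i < D_i}·1{T_i < X_j}·g(T_i)^{-2} and its symmetrisation ψ̄^g(x_i, x_j) = (ψ^g(x_i, x_j) + ψ^g(x_j, x_i))/2. Then sup_{g ∈ 𝒢_ε} | (2/(n(n−1))) Σ_{1≤i<j≤n} ψ̄^g(x_i, x_j) − E[ψ̄^g(x_1, x_2)] | converges to 0 almost surely as n → ∞. -/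
open MeasureTheory ProbabilityTheory Filter
open scoped Classical

/-- `memG ε Tmax g` : the function `g` belongs to the class `𝒢_ε` of non-increasing,
right-continuous functions `[0, Tmax) → [ε, 1]` with `g(0) = 1`. -/
def memG (ε Tmax : ℝ) (g : ℝ → ℝ) : Prop :=
  g 0 = 1 ∧ (∀ t ∈ Set.Ico (0 : ℝ) Tmax, g t ∈ Set.Icc ε 1) ∧
    (∀ s ∈ Set.Ico (0 : ℝ) Tmax, ∀ t ∈ Set.Ico (0 : ℝ) Tmax, s ≤ t → g t ≤ g s) ∧
    (∀ t ∈ Set.Ico (0 : ℝ) Tmax, ContinuousWithinAt g (Set.Ici t) t)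

/-- The kernel `ψ^g(x, y) = 1{T_x < D_x}·1{T_x < X_y}·g(T_x)⁻²` of the denominator of
time-dependent Uno's C-index, where `x = (Z_x, T_x, D_x)` and `X_y = min(T_y, D_y)`. -/
noncomputable def psiker {E : Type*} (g : ℝ → ℝ) (x y : E × ℝ × ℝ) : ℝ :=
  (if x.2.1 < x.2.2 ∧ x.2.1 < min y.2.1 y.2.2 then (1 : ℝ) else 0) * ((g x.2.1) ^ 2)⁻¹

/-- The symmetrisation `ψ̄^g(x, y) = (ψ^g(x, y) + ψ^g(y, x))/2`. -/
noncomputable def psibar {E : Type*} (g : ℝ → ℝ) (x y : E × ℝ × ℝ) : ℝ :=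
  (psiker g x y + psiker g y x) / 2

/-!
Write `H = (ε / g)²`, a monotone function with values in `[0, 1]` on `[0, Tmax)`. The kernel
factorises as `ψ^g(x_i, x_j) = ε⁻² a_H(x_i) 1{T_i < X_j}` with `a_H(x) = 1{T < D} H(T)`, so after
summing over `j` the U-statistic is, up to `O(1/n)`, the average of `a_H(x_i) W_n(T_i)`, where `W_n`
is the empirical survival function of `X = min(T, D)`. By Glivenko–Cantelli `W_n` may be replaced
by its mean `W`, and it remains to control `(1/n) ∑ 1{T_i < D_i} W(T_i) H(T_i)` uniformly over
monotone `H`. The layer-cake formula `H = ∫₀¹ 1{H > u} du` reduces this to uniformity over the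
upper sets of `ℝ`, which admit finitely many `δ`-brackets under any finite measure (cut at
quantiles); so the strong law on countably many brackets suffices. The limit is `E ψ̄^g(x₁, x₂)`
by independence and Fubini.
-/

open Set Topology

theorem MonotoneOn.exists_monotone_extension_Icc {α : Type*} [LinearOrder α] {f : α → ℝ}
    {s : Set α} {a b : ℝ} (hab : a ≤ b) (hf : MonotoneOn f s) (hfs : MapsTo f s (Icc a b)) :
    ∃ F : α → ℝ, Monotone F ∧ (∀ x, F x ∈ Icc a b) ∧ EqOn f F s := by
  obtain ⟨G, hG, hfG⟩ := hf.exists_monotone_extension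
    ⟨a, by rintro _ ⟨x, hx, rfl⟩; exact (hfs hx).1⟩ ⟨b, by rintro _ ⟨x, hx, rfl⟩; exact (hfs hx).2⟩
  refine ⟨fun x => max a (min b (G x)),
    fun x y hxy => max_le_max le_rfl (min_le_min le_rfl (hG hxy)),
    fun x => ⟨le_max_left _ _, max_le hab (min_le_left _ _)⟩, fun x hx => ?_⟩
  simp only [← hfG hx, min_eq_right (hfs hx).2, max_eq_right (hfs hx).1]

theorem tendsto_iSup_abs_sub_of_tendstoUniformly {ι : Type*} {F : ℕ → ι → ℝ} {f : ι → ℝ}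
    (h : TendstoUniformly F f atTop) : Tendsto (fun n => ⨆ i, |F n i - f i|) atTop (𝓝 0) := by
  rw [Metric.tendsto_nhds]
  intro δ hδ
  filter_upwards [Metric.tendstoUniformly_iff.1 h (δ / 2) (half_pos hδ)] with n hn
  rw [Real.dist_eq, sub_zero, abs_of_nonneg (Real.iSup_nonneg fun i => abs_nonneg _)]
  refine (Real.iSup_le (fun i => ?_) (half_pos hδ).le).trans_lt (half_lt_self hδ)
  rw [← Real.dist_eq, dist_comm]
  exact (hn i).le

theorem IsUpperSet.subset_Ioi_of_notMem {α : Type*} [LinearOrder α] {s : Set α}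
    (hs : IsUpperSet s) {a : α} (ha : a ∉ s) : s ⊆ Ioi a :=
  fun _ hx => lt_of_not_ge fun hxa => ha (hs hxa hx)

theorem exists_nat_mul_mem_Ioc {r η : ℝ} (hr : 0 ≤ r) (hη : 0 < η) :
    ∃ j : ℕ, r < j * η ∧ j * η ≤ r + η := by
  refine ⟨⌊r / η⌋₊ + 1, ?_⟩
  have hr' : r = r / η * η := (div_mul_cancel₀ r hη.ne').symm
  have h1 := Nat.lt_floor_add_one (r / η)
  have h2 := Nat.floor_le (div_nonneg hr hη.le)
  push_cast
  constructor <;> nlinarith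

theorem integral_indicator_one_comp {α : Type*} [MeasurableSpace α] {μ : Measure α} {σ : α → ℝ}
    (hσ : Measurable σ) {A : Set ℝ} (hA : MeasurableSet A) :
    ∫ x, A.indicator 1 (σ x) ∂μ = (μ.map σ).real A := by
  rw [← integral_indicator_one hA, integral_map hσ.aemeasurable
    (measurable_one.indicator hA).aestronglyMeasurable]

theorem integral_comp_prodMk_of_indepFun {Ω α : Type*} [MeasurableSpace Ω] [MeasurableSpace α]
    {P : Measure Ω} [IsFiniteMeasure P] {X Y : Ω → α} (hX : AEMeasurable X P)
    (hY : AEMeasurable Y P) (hXY : IndepFun X Y P) (hlaw : P.map Y = P.map X) {f : α × α → ℝ}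
    (hf : Integrable f ((P.map X).prod (P.map X))) :
    ∫ ω, f (X ω, Y ω) ∂P = ∫ x, ∫ y, f (x, y) ∂(P.map X) ∂(P.map X) := by
  have hmap := hXY.map_prod_eq_prod_map_map hX hY
  rw [hlaw] at hmap
  rw [← integral_prod f hf, ← hmap, integral_map (hX.prodMk hY) (hmap ▸ hf.aestronglyMeasurable)]

theorem sum_sum_ite_lt_add_eq (n : ℕ) (f : ℕ → ℕ → ℝ) :
    ∑ i ∈ Finset.range n, ∑ j ∈ Finset.range n, (if i < j then f i j + f j i else 0) =
      ∑ i ∈ Finset.range n, (∑ j ∈ Finset.range n, f i j - f i i) := by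
  have hsplit : ∀ i j, (if i < j then f i j + f j i else 0) =
      (if i < j then f i j else 0) + (if i < j then f j i else 0) := fun i j => by
    split_ifs <;> simp
  have hdiag : ∀ i j, f i j - (if i = j then f i j else 0) =
      (if i < j then f i j else 0) + (if j < i then f i j else 0) := fun i j => by
    rcases lt_trichotomy i j with h | rfl | h
    · simp [h, h.ne, h.not_gt]
    · simp
    · simp [h, h.ne', h.not_gt]
  simp_rw [hsplit, Finset.sum_add_distrib]
  rw [Finset.sum_comm (f := fun i j => if i < j then f j i else 0), ← Finset.sum_add_distrib]
  simp_rw [← Finset.sum_add_distrib, ← hdiag]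
  exact Finset.sum_congr rfl fun i hi => by
    rw [Finset.sum_sub_distrib, Finset.sum_ite_eq, if_pos hi]

theorem abs_sum_mul_sub_div_sub_sum_mul_div_le {n : ℕ} (hn : 2 ≤ n) {a v : ℕ → ℝ}
    {b : ℕ → ℕ → ℝ} {η : ℝ} (ha : ∀ i, a i ∈ Icc 0 1) (hb : ∀ i, b i i ∈ Icc 0 1)
    (hv : ∀ i, v i ∈ Icc 0 1) (hbv : ∀ i, |(∑ j ∈ Finset.range n, b i j) / n - v i| ≤ η) :
    |(∑ i ∈ Finset.range n, a i * (∑ j ∈ Finset.range n, b i j - b i i)) / (n * (n - 1)) -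
        (∑ i ∈ Finset.range n, a i * v i) / n| ≤ 2 * η + 1 / (n - 1) := by
  have hn2 : (2 : ℝ) ≤ n := by exact_mod_cast hn
  have hn1 : (0 : ℝ) < n - 1 := by linarith
  have hη : 0 ≤ η := (abs_nonneg _).trans (hbv 0)
  set T : ℕ → ℝ := fun i => a i * (n * ((∑ j ∈ Finset.range n, b i j) / n - v i) + (v i - b i i))
  have hT : ∀ i, |T i| ≤ n * η + 1 := fun i => by
    have h1 : |n * ((∑ j ∈ Finset.range n, b i j) / n - v i)| ≤ n * η := by
      rw [abs_mul, Nat.abs_cast]; exact mul_le_mul_of_nonneg_left (hbv i) n.cast_nonneg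
    have h2 : |v i - b i i| ≤ 1 :=
      abs_sub_le_iff.2 ⟨by linarith [(hv i).2, (hb i).1], by linarith [(hv i).1, (hb i).2]⟩
    rw [abs_mul, abs_of_nonneg (ha i).1]
    exact (mul_le_mul (ha i).2 ((abs_add_le _ _).trans (add_le_add h1 h2)) (abs_nonneg _)
      zero_le_one).trans_eq (one_mul _)
  have hsum : (∑ i ∈ Finset.range n, a i * (∑ j ∈ Finset.range n, b i j - b i i)) / (n * (n - 1)) -
      (∑ i ∈ Finset.range n, a i * v i) / n = (∑ i ∈ Finset.range n, T i) / (n * (n - 1)) := by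
    have hTi : ∀ i, T i =
        a i * (∑ j ∈ Finset.range n, b i j - b i i) - (n - 1) * (a i * v i) := fun i => by
      simp only [T]; field_simp; ring
    rw [Finset.sum_congr rfl fun i _ => hTi i, Finset.sum_sub_distrib, ← Finset.mul_sum]
    field_simp
  have hq : (0 : ℝ) < n * (n - 1) := mul_pos (by linarith) hn1
  rw [hsum, abs_div, abs_of_pos hq, div_le_iff₀ hq]
  calc |∑ i ∈ Finset.range n, T i| ≤ ∑ i ∈ Finset.range n, (n * η + 1) :=
        (Finset.abs_sum_le_sum_abs _ _).trans (Finset.sum_le_sum fun i _ => hT i)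
    _ = n * (n * η + 1) := by rw [Finset.sum_const, Finset.card_range, nsmul_eq_mul]
    _ ≤ (2 * η + 1 / (n - 1)) * (n * (n - 1)) := by
      field_simp
      nlinarith

theorem abs_mul_indicator_one_le {α : Type*} {a : ℝ} (ha : a ∈ Icc 0 1) (A : Set α) (t : α) :
    |a * A.indicator 1 t| ≤ 1 := by
  rw [abs_mul, abs_of_nonneg ha.1]
  exact mul_le_one₀ ha.2 (abs_nonneg _)
    ((norm_indicator_le_norm_self (1 : α → ℝ) t).trans_eq (by rw [Pi.one_apply, norm_one]))

theorem setIntegral_Ioc_indicator_lt {α : Type*} {H : α → ℝ} {t : α} (ht : H t ∈ Icc 0 1) :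
    ∫ u in Ioc (0 : ℝ) 1, {s | u < H s}.indicator 1 t = H t := by
  have hI : Ioc (0 : ℝ) 1 ∩ Iio (H t) = Ioo 0 (H t) := by
    ext u
    simp only [mem_inter_iff, mem_Ioc, mem_Iio, mem_Ioo]
    exact ⟨fun h => ⟨h.1.1, h.2⟩, fun h => ⟨⟨h.1, h.2.le.trans ht.2⟩, h.2⟩⟩
  change ∫ u in Ioc (0 : ℝ) 1, (Iio (H t)).indicator 1 u = H t
  simp only [setIntegral_indicator measurableSet_Iio, hI, Pi.one_apply, setIntegral_const,
    Real.volume_real_Ioo_of_le ht.1, smul_eq_mul, mul_one, sub_zero]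

theorem integrable_const_mul_indicator_lt {α : Type*} {H : α → ℝ} (a : ℝ) (t : α) :
    Integrable (fun u => a * {s | u < H s}.indicator 1 t) (volume.restrict (Ioc (0 : ℝ) 1)) := by
  change Integrable (fun u => a * (Iio (H t)).indicator 1 u) _
  exact ((integrable_const (1 : ℝ)).indicator measurableSet_Iio).const_mul a

theorem measureReal_Ioi_le_of_forall_lt (ν : Measure ℝ) [IsFiniteMeasure ν] {w c : ℝ}
    (h : ∀ s, w < s → ν.real (Ioi s) ≤ c) : ν.real (Ioi w) ≤ c := by
  have hpos : ∀ k : ℕ, (0 : ℝ) < 1 / (k + 1) := fun k => Nat.one_div_pos_of_nat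
  have hU : ⋃ k : ℕ, Ioi (w + 1 / (k + 1)) = Ioi w := by
    ext s
    simp only [mem_Ioi, mem_iUnion]
    refine ⟨fun ⟨k, hk⟩ => (lt_add_of_pos_right _ (hpos k)).trans hk, fun hs => ?_⟩
    obtain ⟨k, hk⟩ := exists_nat_one_div_lt (sub_pos.2 hs)
    exact ⟨k, by linarith⟩
  have hlim := (ENNReal.tendsto_toReal (measure_ne_top ν _)).comp
    (tendsto_measure_iUnion_atTop (μ := ν) (s := fun k : ℕ => Ioi (w + 1 / (k + 1)))
      fun k l hkl => Ioi_subset_Ioi (by gcongr))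
  rw [hU] at hlim
  exact le_of_tendsto' hlim fun k => h _ (lt_add_of_pos_right _ (hpos k))

theorem le_measureReal_Ici_of_forall_lt (ν : Measure ℝ) [IsFiniteMeasure ν] {w c : ℝ}
    (h : ∀ s, s < w → c ≤ ν.real (Ioi s)) : c ≤ ν.real (Ici w) := by
  have hpos : ∀ k : ℕ, (0 : ℝ) < 1 / (k + 1) := fun k => Nat.one_div_pos_of_nat
  have hI : ⋂ k : ℕ, Ioi (w - 1 / (k + 1)) = Ici w := by
    ext s
    simp only [mem_Ici, mem_Ioi, mem_iInter]
    refine ⟨fun hs => ?_, fun hs k => (sub_lt_self _ (hpos k)).trans_le hs⟩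
    by_contra! hlt
    obtain ⟨k, hk⟩ := exists_nat_one_div_lt (sub_pos.2 hlt)
    linarith [hs k]
  have hlim := (ENNReal.tendsto_toReal (measure_ne_top ν _)).comp
    (tendsto_measure_iInter_atTop (μ := ν) (s := fun k : ℕ => Ioi (w - 1 / (k + 1)))
      (fun k => measurableSet_Ioi.nullMeasurableSet)
      (fun k l hkl => Ioi_subset_Ioi (by gcongr)) ⟨0, measure_ne_top ν _⟩)
  rw [hI] at hlim
  exact ge_of_tendsto' hlim fun k => h _ (sub_lt_self _ (hpos k))

theorem exists_measureReal_Ioi_le_le_measureReal_Ici (ν : Measure ℝ) [IsFiniteMeasure ν]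
    {c : ℝ} (hc0 : 0 < c) (hcν : c < ν.real univ) :
    ∃ w, ν.real (Ioi w) ≤ c ∧ c ≤ ν.real (Ici w) := by
  set W := {s | ν.real (Ioi s) ≤ c}
  have hne : W.Nonempty := by
    have h : Tendsto (fun s => ν.real (Iic s)) atTop (𝓝 (ν.real univ)) :=
      (ENNReal.tendsto_toReal (measure_ne_top ν _)).comp (tendsto_measure_Iic_atTop ν)
    obtain ⟨s, hs⟩ := (h.eventually (lt_mem_nhds (sub_lt_self _ hc0))).exists
    refine ⟨s, ?_⟩
    show ν.real (Ioi s) ≤ c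
    rw [← compl_Iic, measureReal_compl measurableSet_Iic]
    linarith
  have hbdd : BddBelow W := by
    have h := (ENNReal.tendsto_toReal (measure_ne_top ν _)).comp
      (tendsto_measure_iUnion_atBot (μ := ν) fun a b hab => Ioi_subset_Ioi hab)
    rw [iUnion_Ioi] at h
    obtain ⟨s₀, hs₀⟩ := (h.eventually (lt_mem_nhds hcν)).exists_forall_of_atBot
    exact ⟨s₀, fun s hs => le_of_not_gt fun hlt => (hs₀ s hlt.le).not_ge hs⟩
  refine ⟨sInf W, measureReal_Ioi_le_of_forall_lt ν fun s hs => ?_,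
    le_measureReal_Ici_of_forall_lt ν fun s hs => ?_⟩
  · obtain ⟨s', hs'W, hs's⟩ := exists_lt_of_csInf_lt hne hs
    exact (measureReal_mono (Ioi_subset_Ioi hs's.le)).trans hs'W
  · exact (not_le.1 fun h => hs.not_ge (csInf_le hbdd h)).le

theorem IsUpperSet.subset_Ioi_of_measureReal_lt {ν : Measure ℝ} [IsFiniteMeasure ν] {U : Set ℝ}
    (hU : IsUpperSet U) {w c : ℝ} (hw : c ≤ ν.real (Ici w)) (hUc : ν.real U < c) : U ⊆ Ioi w :=
  hU.subset_Ioi_of_notMem fun hwU => (hw.trans (measureReal_mono (hU.Ici_subset hwU))).not_gt hUc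

theorem IsUpperSet.Ici_subset_of_measureReal_lt {ν : Measure ℝ} [IsFiniteMeasure ν] {U : Set ℝ}
    (hU : IsUpperSet U) {w c : ℝ} (hw : ν.real (Ioi w) ≤ c) (hcU : c < ν.real U) : Ici w ⊆ U :=
  hU.Ici_subset (not_not.1 fun hwU =>
    ((measureReal_mono (hU.subset_Ioi_of_notMem hwU)).trans hw).not_gt hcU)

theorem exists_finset_isUpperSet_bracket (ν : Measure ℝ) [IsFiniteMeasure ν] {δ : ℝ}
    (hδ : 0 < δ) :
    ∃ 𝒞 : Finset (Set ℝ), (∀ C ∈ 𝒞, MeasurableSet C) ∧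
      ∀ U, IsUpperSet U → ∃ L ∈ 𝒞, ∃ R ∈ 𝒞, L ⊆ U ∧ U ⊆ R ∧ ν.real R ≤ ν.real L + δ := by
  set η := δ / 3 with hηδ
  have hη : 0 < η := by positivity
  set m := ν.real univ
  choose! w hw using fun c (hc : 0 < c ∧ c < m) =>
    exists_measureReal_Ioi_le_le_measureReal_Ici ν hc.1 hc.2
  obtain ⟨K, hK⟩ := exists_nat_ge (m / η)
  set 𝒞 : Finset (Set ℝ) := {∅, univ} ∪ (Finset.range K).image (fun j : ℕ => Ioi (w (j * η))) ∪
    (Finset.range K).image (fun j : ℕ => Ici (w (j * η)))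
  have hlevel : ∀ j : ℕ, 0 < j * η → j * η < m → Ioi (w (j * η)) ∈ 𝒞 ∧ Ici (w (j * η)) ∈ 𝒞 ∧
      ν.real (Ioi (w (j * η))) ≤ j * η ∧ j * η ≤ ν.real (Ici (w (j * η))) := by
    intro j hj0 hjm
    have hjK : j ∈ Finset.range K := by
      rw [div_le_iff₀ hη] at hK
      exact Finset.mem_range.2 (by exact_mod_cast lt_of_mul_lt_mul_right (hjm.trans_le hK) hη.le)
    refine ⟨?_, ?_, hw _ ⟨hj0, hjm⟩⟩ <;> simp only [𝒞, Finset.mem_union, Finset.mem_image]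
    exacts [Or.inl (Or.inr ⟨j, hjK, rfl⟩), Or.inr ⟨j, hjK, rfl⟩]
  refine ⟨𝒞, ?_, fun U hU => ?_⟩
  · intro C hC
    simp only [𝒞, Finset.mem_union, Finset.mem_insert, Finset.mem_singleton,
      Finset.mem_image] at hC
    rcases hC with ((rfl | rfl) | ⟨j, -, rfl⟩) | ⟨j, -, rfl⟩ <;> measurability
  set r := ν.real U
  have hr0 : 0 ≤ r := measureReal_nonneg
  have hrm : r ≤ m := measureReal_mono (subset_univ U)
  obtain ⟨R, hR, hUR, hRr⟩ : ∃ R ∈ 𝒞, U ⊆ R ∧ ν.real R ≤ r + η := by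
    obtain ⟨j, hj1, hj2⟩ := exists_nat_mul_mem_Ioc hr0 hη
    by_cases hjm : m ≤ j * η
    · exact ⟨univ, by simp [𝒞], subset_univ U, by linarith⟩
    obtain ⟨hIoi, -, hIoi_le, hle_Ici⟩ := hlevel j (by linarith) (not_le.1 hjm)
    exact ⟨_, hIoi, hU.subset_Ioi_of_measureReal_lt hle_Ici hj1, by linarith⟩
  obtain ⟨L, hL, hLU, hrL⟩ : ∃ L ∈ 𝒞, L ⊆ U ∧ r - 2 * η ≤ ν.real L := by
    by_cases hrη : r ≤ 2 * η
    · exact ⟨∅, by simp [𝒞], empty_subset U, by simp; linarith⟩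
    obtain ⟨j, hj1, hj2⟩ := exists_nat_mul_mem_Ioc (by linarith : 0 ≤ r - 2 * η) hη
    obtain ⟨-, hIci, hIoi_le, hle_Ici⟩ := hlevel j (by linarith) (by linarith)
    exact ⟨_, hIci, hU.Ici_subset_of_measureReal_lt hIoi_le (by linarith), by linarith⟩
  exact ⟨L, hL, R, hR, hLU, hUR, by linarith⟩

section EmpiricalProcess

variable {Ω 𝒳 : Type*}

noncomputable def empiricalMean (X : ℕ → Ω → 𝒳) (n : ℕ) (ω : Ω) (f : 𝒳 → ℝ) : ℝ :=
  (∑ i ∈ Finset.range n, f (X i ω)) / n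

theorem empiricalMean_mono {X : ℕ → Ω → 𝒳} {n : ℕ} {ω : Ω} {f g : 𝒳 → ℝ}
    (h : ∀ x, f x ≤ g x) : empiricalMean X n ω f ≤ empiricalMean X n ω g :=
  div_le_div_of_nonneg_right (Finset.sum_le_sum fun _ _ => h _) n.cast_nonneg

theorem empiricalMean_mul_comp_eq_setIntegral {X : ℕ → Ω → 𝒳} {n : ℕ} {ω : Ω} {φ τ : 𝒳 → ℝ}
    {H : ℝ → ℝ} (hH01 : ∀ t, H t ∈ Icc 0 1) :
    (empiricalMean X n ω fun x => φ x * H (τ x)) =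
      ∫ u in Ioc (0 : ℝ) 1, empiricalMean X n ω fun x => φ x * {t | u < H t}.indicator 1 (τ x) := by
  simp only [empiricalMean]
  rw [integral_div, integral_finsetSum _ fun i _ => integrable_const_mul_indicator_lt _ _]
  simp_rw [integral_const_mul, setIntegral_Ioc_indicator_lt (hH01 _)]

variable [MeasurableSpace 𝒳]

theorem integrable_mul_indicator_comp {μ : Measure 𝒳} [IsFiniteMeasure μ] {φ τ : 𝒳 → ℝ}
    (hφ : Measurable φ) (hφ01 : ∀ x, φ x ∈ Icc 0 1) (hτ : Measurable τ) {A : Set ℝ}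
    (hA : MeasurableSet A) : Integrable (fun x => φ x * A.indicator 1 (τ x)) μ :=
  .of_bound (hφ.mul ((measurable_one.indicator hA).comp hτ)).aestronglyMeasurable 1
    (ae_of_all _ fun x => abs_mul_indicator_one_le (hφ01 x) A (τ x))

theorem integrable_uncurry_mul_indicator_lt {μ : Measure 𝒳} [IsFiniteMeasure μ] {φ τ : 𝒳 → ℝ}
    (hφ : Measurable φ) (hφ01 : ∀ x, φ x ∈ Icc 0 1) (hτ : Measurable τ) {H : ℝ → ℝ}
    (hH : Measurable H) :
    Integrable (Function.uncurry fun x u => φ x * {t | u < H t}.indicator 1 (τ x))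
      (μ.prod (volume.restrict (Ioc (0 : ℝ) 1))) := by
  have hpair : (Function.uncurry fun x u => φ x * {t | u < H t}.indicator 1 (τ x)) =
      fun p : 𝒳 × ℝ => φ p.1 * {p : 𝒳 × ℝ | p.2 < H (τ p.1)}.indicator 1 p := by
    ext ⟨x, u⟩; rfl
  refine .of_bound ?_ 1 (ae_of_all _ fun p => abs_mul_indicator_one_le (hφ01 p.1) _ _)
  rw [hpair]
  exact ((hφ.comp measurable_fst).mul (measurable_one.indicator (measurableSet_lt measurable_snd
    (hH.comp (hτ.comp measurable_fst))))).aestronglyMeasurable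

theorem integral_mul_comp_eq_setIntegral_integral_indicator {μ : Measure 𝒳} [IsFiniteMeasure μ]
    {φ τ : 𝒳 → ℝ} (hφ : Measurable φ) (hφ01 : ∀ x, φ x ∈ Icc 0 1) (hτ : Measurable τ)
    {H : ℝ → ℝ} (hH : Measurable H) (hH01 : ∀ t, H t ∈ Icc 0 1) :
    ∫ x, φ x * H (τ x) ∂μ =
      ∫ u in Ioc (0 : ℝ) 1, ∫ x, φ x * {t | u < H t}.indicator 1 (τ x) ∂μ := by
  have hlayer : ∀ x, φ x * H (τ x) =
      ∫ u in Ioc (0 : ℝ) 1, φ x * {t | u < H t}.indicator 1 (τ x) := fun x => by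
    rw [integral_const_mul, setIntegral_Ioc_indicator_lt (hH01 _)]
  rw [integral_congr_ae (ae_of_all _ hlayer)]
  exact integral_integral_swap (integrable_uncurry_mul_indicator_lt hφ hφ01 hτ hH)

theorem integral_mul_indicator_le_and_sub_le {μ : Measure 𝒳} [IsFiniteMeasure μ] {φ τ : 𝒳 → ℝ}
    (hφ : Measurable φ) (hφ01 : ∀ x, φ x ∈ Icc 0 1) (hτ : Measurable τ) {A B : Set ℝ}
    (hA : MeasurableSet A) (hB : MeasurableSet B) (hAB : A ⊆ B) :
    ∫ x, φ x * A.indicator 1 (τ x) ∂μ ≤ ∫ x, φ x * B.indicator 1 (τ x) ∂μ ∧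
      ∫ x, φ x * B.indicator 1 (τ x) ∂μ - ∫ x, φ x * A.indicator 1 (τ x) ∂μ ≤
        (μ.map τ).real B - (μ.map τ).real A := by
  have hind : ∀ t, A.indicator (1 : ℝ → ℝ) t ≤ B.indicator 1 t :=
    indicator_le_indicator_of_subset hAB fun _ => zero_le_one
  have hint := fun {C : Set ℝ} (hC : MeasurableSet C) =>
    integrable_mul_indicator_comp (μ := μ) hφ hφ01 hτ hC
  have hint₁ : ∀ {C : Set ℝ}, MeasurableSet C →
      Integrable (fun x => C.indicator (1 : ℝ → ℝ) (τ x)) μ := by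
    intro C hC
    simpa using integrable_mul_indicator_comp (μ := μ) (φ := fun _ => 1) measurable_const
      (fun _ => ⟨zero_le_one, le_rfl⟩) hτ hC
  refine ⟨integral_mono (hint hA) (hint hB) fun x => mul_le_mul_of_nonneg_left (hind _) (hφ01 x).1,
    ?_⟩
  rw [← integral_indicator_one_comp hτ hA, ← integral_indicator_one_comp hτ hB,
    ← integral_sub (hint hB) (hint hA), ← integral_sub (hint₁ hB) (hint₁ hA)]
  refine integral_mono ((hint hB).sub (hint hA)) ((hint₁ hB).sub (hint₁ hA)) fun x => ?_
  linarith [mul_le_mul_of_nonneg_right (hφ01 x).2 (sub_nonneg.2 (hind (τ x)))]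

variable [MeasurableSpace Ω] {P : Measure Ω} [IsFiniteMeasure P] {X : ℕ → Ω → 𝒳}

theorem ae_tendsto_empiricalMean (hindep : Pairwise fun i j => IndepFun (X i) (X j) P)
    (hident : ∀ i, IdentDistrib (X i) (X 0) P P) {f : 𝒳 → ℝ} (hf : Measurable f) {C : ℝ}
    (hC : ∀ x, |f x| ≤ C) :
    ∀ᵐ ω ∂P, Tendsto (fun n => empiricalMean X n ω f) atTop (𝓝 (∫ x, f x ∂(P.map (X 0)))) := by
  have hint : Integrable (fun ω => f (X 0 ω)) P :=
    .of_bound (hf.comp_aemeasurable (hident 0).aemeasurable_fst).aestronglyMeasurable C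
      (ae_of_all _ fun _ => (Real.norm_eq_abs _).trans_le (hC _))
  filter_upwards [strong_law_ae (fun i ω => f (X i ω)) hint (fun i j hij => (hindep hij).comp hf hf)
    fun i => (hident i).comp hf] with ω hω
  rw [integral_map (hident 0).aemeasurable_fst hf.aestronglyMeasurable]
  simpa [empiricalMean, div_eq_inv_mul] using hω

theorem ae_tendstoUniformlyOn_isUpperSet (hindep : Pairwise fun i j => IndepFun (X i) (X j) P)
    (hident : ∀ i, IdentDistrib (X i) (X 0) P P) {φ τ : 𝒳 → ℝ} (hφ : Measurable φ)
    (hφ01 : ∀ x, φ x ∈ Icc 0 1) (hτ : Measurable τ) :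
    ∀ᵐ ω ∂P, TendstoUniformlyOn (fun n U => empiricalMean X n ω fun x => φ x * U.indicator 1 (τ x))
      (fun U => ∫ x, φ x * U.indicator 1 (τ x) ∂(P.map (X 0))) atTop {U | IsUpperSet U} := by
  set μ := P.map (X 0)
  set F : Set ℝ → ℝ := fun U => ∫ x, φ x * U.indicator 1 (τ x) ∂μ
  set Fₙ : ℕ → Ω → Set ℝ → ℝ := fun n ω U => empiricalMean X n ω fun x => φ x * U.indicator 1 (τ x)
  have hFₙ_mono : ∀ n ω {A B : Set ℝ}, A ⊆ B → Fₙ n ω A ≤ Fₙ n ω B := fun n ω A B hAB =>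
    empiricalMean_mono fun x => mul_le_mul_of_nonneg_left
      (indicator_le_indicator_of_subset hAB (fun _ => zero_le_one) _) (hφ01 x).1
  choose 𝒞 h𝒞 hbr using fun m : ℕ =>
    exists_finset_isUpperSet_bracket (μ.map τ) (Nat.one_div_pos_of_nat (n := m))
  have hslln : ∀ᵐ ω ∂P, ∀ m, ∀ C ∈ 𝒞 m, Tendsto (fun n => Fₙ n ω C) atTop (𝓝 (F C)) :=
    ae_all_iff.2 fun m => (eventually_all_finset (𝒞 m)).2 fun C hC =>
      ae_tendsto_empiricalMean hindep hident
        (hφ.mul ((measurable_one.indicator (h𝒞 m C hC)).comp hτ))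
        fun x => abs_mul_indicator_one_le (hφ01 x) C (τ x)
  filter_upwards [hslln] with ω hω
  rw [Metric.tendstoUniformlyOn_iff]
  intro δ hδ
  obtain ⟨m, hm⟩ := exists_nat_one_div_lt (by positivity : 0 < δ / 2)
  filter_upwards [(eventually_all_finset (𝒞 m)).2 fun C hC =>
    Metric.tendsto_nhds.1 (hω m C hC) _ Nat.one_div_pos_of_nat] with n hn U hU
  obtain ⟨L, hL, R, hR, hLU, hUR, hLR⟩ := hbr m U hU
  have hUm : MeasurableSet U := hU.ordConnected.measurableSet
  have hL' := hn L hL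
  have hR' := hn R hR
  rw [Real.dist_eq, abs_lt] at hL' hR'
  rw [Real.dist_eq, abs_lt]
  have := integral_mul_indicator_le_and_sub_le (μ := μ) hφ hφ01 hτ (h𝒞 m L hL) hUm hLU
  have := integral_mul_indicator_le_and_sub_le (μ := μ) hφ hφ01 hτ hUm (h𝒞 m R hR) hUR
  have := integral_mul_indicator_le_and_sub_le (μ := μ) hφ hφ01 hτ (h𝒞 m L hL) (h𝒞 m R hR) (hLU.trans hUR)
  have := hFₙ_mono n ω hLU
  have := hFₙ_mono n ω hUR
  generalize (1 : ℝ) / (m + 1) = e at *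
  constructor <;> linarith

theorem ae_tendstoUniformlyOn_monotone (hindep : Pairwise fun i j => IndepFun (X i) (X j) P)
    (hident : ∀ i, IdentDistrib (X i) (X 0) P P) {φ τ : 𝒳 → ℝ} (hφ : Measurable φ)
    (hφ01 : ∀ x, φ x ∈ Icc 0 1) (hτ : Measurable τ) :
    ∀ᵐ ω ∂P, TendstoUniformlyOn (fun n H => empiricalMean X n ω fun x => φ x * H (τ x))
      (fun H => ∫ x, φ x * H (τ x) ∂(P.map (X 0))) atTop
      {H | Monotone H ∧ ∀ t, H t ∈ Icc 0 1} := by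
  set μ := P.map (X 0)
  filter_upwards [ae_tendstoUniformlyOn_isUpperSet hindep hident hφ hφ01 hτ] with ω hω
  rw [Metric.tendstoUniformlyOn_iff] at hω ⊢
  intro δ hδ
  filter_upwards [hω (δ / 2) (half_pos hδ)] with n hn H ⟨hH, hH01⟩
  have hint_emp : Integrable
      (fun u => empiricalMean X n ω fun x => φ x * {t | u < H t}.indicator 1 (τ x))
      (volume.restrict (Ioc (0 : ℝ) 1)) :=
    (integrable_finsetSum _ fun i _ => integrable_const_mul_indicator_lt _ _).div_const _
  have hint_pop : Integrable (fun u => ∫ x, φ x * {t | u < H t}.indicator 1 (τ x) ∂μ)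
      (volume.restrict (Ioc (0 : ℝ) 1)) :=
    (integrable_uncurry_mul_indicator_lt hφ hφ01 hτ hH.measurable).integral_prod_right
  have hbound : ‖∫ u in Ioc (0 : ℝ) 1,
      ((empiricalMean X n ω fun x => φ x * {t | u < H t}.indicator 1 (τ x)) -
        ∫ x, φ x * {t | u < H t}.indicator 1 (τ x) ∂μ)‖ ≤ δ / 2 * volume.real (Ioc (0 : ℝ) 1) :=
    norm_setIntegral_le_of_norm_le_const measure_Ioc_lt_top fun u _ => by
      rw [Real.norm_eq_abs, ← Real.dist_eq, dist_comm]
      exact (hn {t | u < H t} fun a b hab ha => lt_of_lt_of_le ha (hH hab)).le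
  rw [Real.norm_eq_abs, Real.volume_real_Ioc_of_le zero_le_one, integral_sub hint_emp hint_pop]
    at hbound
  rw [integral_mul_comp_eq_setIntegral_integral_indicator hφ hφ01 hτ hH.measurable hH01,
    empiricalMean_mul_comp_eq_setIntegral hH01, dist_comm, Real.dist_eq]
  linarith

end EmpiricalProcess

section Survival

variable {E : Type*}

noncomputable def eventWeight (H : ℝ → ℝ) (x : E × ℝ × ℝ) : ℝ :=
  (if x.2.1 < x.2.2 then 1 else 0) * H x.2.1

noncomputable def atRisk (t : ℝ) (y : E × ℝ × ℝ) : ℝ :=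
  (Ioi t).indicator 1 (min y.2.1 y.2.2)

theorem eventWeight_mem_Icc {H : ℝ → ℝ} (hH : ∀ t, H t ∈ Icc 0 1) (x : E × ℝ × ℝ) :
    eventWeight H x ∈ Icc 0 1 := by
  unfold eventWeight
  split_ifs
  · simpa using hH x.2.1
  · simp

theorem atRisk_mem_Icc (t : ℝ) (y : E × ℝ × ℝ) : atRisk t y ∈ Icc 0 1 := by
  unfold atRisk
  by_cases h : min y.2.1 y.2.2 ∈ Ioi t <;> simp [h]

theorem eventWeight_mul_comm (H G : ℝ → ℝ) (x : E × ℝ × ℝ) :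
    eventWeight H x * G x.2.1 = eventWeight G x * H x.2.1 := by
  unfold eventWeight
  ring

theorem psiker_eq {ε : ℝ} (hε : ε ≠ 0) {g H : ℝ → ℝ} {x : E × ℝ × ℝ}
    (hH : H x.2.1 = (ε / g x.2.1) ^ 2) (y : E × ℝ × ℝ) :
    psiker g x y = (ε ^ 2)⁻¹ * (eventWeight H x * atRisk x.2.1 y) := by
  have hinv : ((g x.2.1) ^ 2)⁻¹ = (ε ^ 2)⁻¹ * H x.2.1 := by
    rw [hH, div_pow, div_eq_mul_inv, inv_mul_cancel_left₀ (pow_ne_zero 2 hε)]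
  simp only [psiker, eventWeight, atRisk, indicator_apply, mem_Ioi, Pi.one_apply, hinv]
  rw [← one_mul (1 : ℝ), ← ite_zero_mul_ite_zero, one_mul]
  ring

theorem uStat_psibar_eq {ε : ℝ} (hε : ε ≠ 0) {g H : ℝ → ℝ} (x : ℕ → E × ℝ × ℝ)
    (hH : ∀ i, H (x i).2.1 = (ε / g (x i).2.1) ^ 2) (n : ℕ) :
    2 / (n * (n - 1) : ℝ) * ∑ i ∈ Finset.range n, ∑ j ∈ Finset.range n,
        (if i < j then psibar g (x i) (x j) else 0) =
      (ε ^ 2)⁻¹ * ((∑ i ∈ Finset.range n, eventWeight H (x i) *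
        (∑ j ∈ Finset.range n, atRisk (x i).2.1 (x j) - atRisk (x i).2.1 (x i))) /
          (n * (n - 1))) := by
  have hhalf : ∀ i j, (if i < j then psibar g (x i) (x j) else 0) =
      (if i < j then psiker g (x i) (x j) + psiker g (x j) (x i) else 0) / 2 := fun i j => by
    split_ifs <;> simp [psibar]
  simp_rw [hhalf, ← Finset.sum_div, sum_sum_ite_lt_add_eq, psiker_eq hε (hH _), ← Finset.mul_sum,
    ← mul_sub, ← Finset.mul_sum]
  ring

theorem exists_monotone_eq_div_sq_of_memG {ε Tmax : ℝ} (hε : 0 < ε) {g : ℝ → ℝ}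
    (hg : memG ε Tmax g) : ∃ H : ℝ → ℝ, Monotone H ∧ (∀ t, H t ∈ Icc 0 1) ∧
      EqOn (fun t => (ε / g t) ^ 2) H (Ico 0 Tmax) := by
  obtain ⟨-, hgε, hganti, -⟩ := hg
  have hgpos : ∀ t ∈ Ico 0 Tmax, 0 < g t := fun t ht => hε.trans_le (hgε t ht).1
  refine MonotoneOn.exists_monotone_extension_Icc zero_le_one (fun s hs t ht hst => ?_)
    fun t ht => ?_
  · exact pow_le_pow_left₀ (div_nonneg hε.le (hgpos s hs).le)
      (div_le_div_of_nonneg_left hε.le (hgpos t ht) (hganti s hs t ht hst)) 2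
  · exact ⟨sq_nonneg _, pow_le_one₀ (div_nonneg hε.le (hgpos t ht).le)
      ((div_le_one (hgpos t ht)).2 (hgε t ht).1)⟩

variable [MeasurableSpace E]

noncomputable def obsSurvival (μ : Measure (E × ℝ × ℝ)) (t : ℝ) : ℝ :=
  ∫ y, atRisk t y ∂μ

theorem obsSurvival_eq (μ : Measure (E × ℝ × ℝ)) (t : ℝ) :
    obsSurvival μ t = (μ.map fun y => min y.2.1 y.2.2).real (Ioi t) :=
  integral_indicator_one_comp (measurable_snd.fst.min measurable_snd.snd) measurableSet_Ioi

theorem antitone_obsSurvival (μ : Measure (E × ℝ × ℝ)) [IsFiniteMeasure μ] :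
    Antitone (obsSurvival μ) := fun s t hst => by
  rw [obsSurvival_eq, obsSurvival_eq]
  exact measureReal_mono (Ioi_subset_Ioi hst)

theorem obsSurvival_mem_Icc (μ : Measure (E × ℝ × ℝ)) [IsProbabilityMeasure μ] (t : ℝ) :
    obsSurvival μ t ∈ Icc 0 1 := by
  have := Measure.isProbabilityMeasure_map (μ := μ)
    (measurable_snd.fst.min measurable_snd.snd).aemeasurable
  rw [obsSurvival_eq]
  exact ⟨measureReal_nonneg, measureReal_le_one⟩

theorem ae_tendstoUniformly_empiricalMean_atRisk {Ω : Type*} [MeasurableSpace Ω] {P : Measure Ω}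
    [IsFiniteMeasure P] {ζ : ℕ → Ω → E × ℝ × ℝ}
    (hindep : Pairwise fun i j => IndepFun (ζ i) (ζ j) P)
    (hident : ∀ i, IdentDistrib (ζ i) (ζ 0) P P) :
    ∀ᵐ ω ∂P, TendstoUniformly (fun n t => empiricalMean ζ n ω (atRisk t))
      (obsSurvival (P.map (ζ 0))) atTop := by
  filter_upwards [ae_tendstoUniformlyOn_isUpperSet hindep hident (φ := fun _ => 1)
    measurable_const (fun _ => ⟨zero_le_one, le_rfl⟩) (measurable_snd.fst.min measurable_snd.snd)]
    with ω hω
  rw [Metric.tendstoUniformlyOn_iff] at hω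
  refine Metric.tendstoUniformly_iff.2 fun δ hδ => ?_
  filter_upwards [hω δ hδ] with n hn t
  have h := hn (Ioi t) (isUpperSet_Ioi t)
  simp only [one_mul] at h
  exact h

theorem measurable_eventWeight {H : ℝ → ℝ} (hH : Measurable H) :
    Measurable (eventWeight (E := E) H) :=
  (Measurable.ite (measurableSet_lt measurable_snd.fst measurable_snd.snd) measurable_const
    measurable_const).mul (hH.comp measurable_snd.fst)

theorem measurable_atRisk_uncurry :
    Measurable fun p : (E × ℝ × ℝ) × (E × ℝ × ℝ) => atRisk p.1.2.1 p.2 := by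
  have : (fun p : (E × ℝ × ℝ) × (E × ℝ × ℝ) => atRisk p.1.2.1 p.2) =
      {p | p.1.2.1 < min p.2.2.1 p.2.2.2}.indicator 1 := by
    ext p; rfl
  rw [this]
  exact measurable_one.indicator (measurableSet_lt measurable_fst.snd.fst
    (measurable_snd.snd.fst.min measurable_snd.snd.snd))

theorem integral_psibar_eq {Ω : Type*} [MeasurableSpace Ω] {P : Measure Ω} [IsFiniteMeasure P]
    {X Y : Ω → E × ℝ × ℝ} (hX : Measurable X) (hY : Measurable Y) (hXY : IndepFun X Y P)
    (hlaw : P.map Y = P.map X) {ε : ℝ} (hε : ε ≠ 0) {g H : ℝ → ℝ} (hHm : Measurable H)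
    (hH01 : ∀ t, H t ∈ Icc 0 1) (hgX : ∀ ω, H (X ω).2.1 = (ε / g (X ω).2.1) ^ 2)
    (hgY : ∀ ω, H (Y ω).2.1 = (ε / g (Y ω).2.1) ^ 2) :
    ∫ ω, psibar g (X ω) (Y ω) ∂P =
      (ε ^ 2)⁻¹ * ∫ x, eventWeight H x * ∫ y, atRisk x.2.1 y ∂(P.map X) ∂(P.map X) := by
  set κ : (E × ℝ × ℝ) × (E × ℝ × ℝ) → ℝ := fun p => eventWeight H p.1 * atRisk p.1.2.1 p.2
  have hκm : Measurable κ := ((measurable_eventWeight hHm).comp measurable_fst).mul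
    measurable_atRisk_uncurry
  have hκ : ∀ p, |κ p| ≤ 1 := fun p => abs_mul_indicator_one_le (eventWeight_mem_Icc hH01 p.1) _ _
  have hint : ∀ {Z₁ Z₂ : Ω → E × ℝ × ℝ}, Measurable Z₁ → Measurable Z₂ →
      Integrable (fun ω => κ (Z₁ ω, Z₂ ω)) P := fun h₁ h₂ =>
    .of_bound (hκm.comp (h₁.prodMk h₂)).aestronglyMeasurable 1 (ae_of_all _ fun _ => hκ _)
  have hκint : Integrable κ ((P.map X).prod (P.map X)) :=
    .of_bound hκm.aestronglyMeasurable 1 (ae_of_all _ hκ)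
  have hXY' := integral_comp_prodMk_of_indepFun hX.aemeasurable hY.aemeasurable hXY hlaw hκint
  have hYX' := integral_comp_prodMk_of_indepFun hY.aemeasurable hX.aemeasurable hXY.symm
    hlaw.symm (hlaw ▸ hκint)
  rw [hlaw] at hYX'
  have hpt : ∀ ω, psibar g (X ω) (Y ω) =
      (ε ^ 2)⁻¹ * ((κ (X ω, Y ω) + κ (Y ω, X ω)) / 2) := fun ω => by
    rw [psibar, psiker_eq hε (hgX ω), psiker_eq hε (hgY ω)]; ring
  simp_rw [hpt, integral_const_mul, integral_div, integral_add (hint hX hY) (hint hY hX), hXY',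
    hYX', κ, integral_const_mul]
  ring

theorem abs_uStat_psibar_sub_integral_le {Ω : Type*} [MeasurableSpace Ω] {P : Measure Ω}
    [IsProbabilityMeasure P] {ζ : ℕ → Ω → E × ℝ × ℝ} (hmeas : ∀ i, Measurable (ζ i))
    (hident : P.map (ζ 1) = P.map (ζ 0)) (hindep : IndepFun (ζ 0) (ζ 1) P) {ε : ℝ} (hε : ε ≠ 0)
    {g H : ℝ → ℝ} (hHm : Measurable H) (hH01 : ∀ t, H t ∈ Icc 0 1)
    (hgH : ∀ i ω, H (ζ i ω).2.1 = (ε / g (ζ i ω).2.1) ^ 2) {n : ℕ} (hn : 2 ≤ n) {ω : Ω} {η : ℝ}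
    (hrisk : ∀ t, |empiricalMean ζ n ω (atRisk t) - obsSurvival (P.map (ζ 0)) t| ≤ η)
    (hweight : |(empiricalMean ζ n ω fun x => eventWeight (obsSurvival (P.map (ζ 0))) x * H x.2.1) -
      ∫ x, eventWeight (obsSurvival (P.map (ζ 0))) x * H x.2.1 ∂(P.map (ζ 0))| ≤ η) :
    |2 / (n * (n - 1) : ℝ) * (∑ i ∈ Finset.range n, ∑ j ∈ Finset.range n,
        if i < j then psibar g (ζ i ω) (ζ j ω) else 0) - ∫ ω', psibar g (ζ 0 ω') (ζ 1 ω') ∂P| ≤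
      (ε ^ 2)⁻¹ * (3 * η + 1 / (n - 1)) := by
  have : IsProbabilityMeasure (P.map (ζ 0)) :=
    Measure.isProbabilityMeasure_map (hmeas 0).aemeasurable
  set W := obsSurvival (P.map (ζ 0))
  have hU := abs_sum_mul_sub_div_sub_sum_mul_div_le hn (a := fun i => eventWeight H (ζ i ω))
    (b := fun i j => atRisk (ζ i ω).2.1 (ζ j ω)) (v := fun i => W (ζ i ω).2.1)
    (fun i => eventWeight_mem_Icc hH01 _) (fun i => atRisk_mem_Icc _ _)
    (fun i => obsSurvival_mem_Icc _ _) fun i => hrisk _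
  have hemp : (∑ i ∈ Finset.range n, eventWeight H (ζ i ω) * W (ζ i ω).2.1) / n =
      empiricalMean ζ n ω fun x => eventWeight W x * H x.2.1 := by
    simp only [empiricalMean, eventWeight_mul_comm H W]
  have hpop : ∫ x, eventWeight H x * ∫ y, atRisk x.2.1 y ∂(P.map (ζ 0)) ∂(P.map (ζ 0)) =
      ∫ x, eventWeight W x * H x.2.1 ∂(P.map (ζ 0)) :=
    integral_congr_ae (ae_of_all _ fun x => eventWeight_mul_comm H W x)
  rw [hemp] at hU
  rw [uStat_psibar_eq hε (fun i => ζ i ω) (fun i => hgH i ω), integral_psibar_eq (hmeas 0)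
    (hmeas 1) hindep hident hε hHm hH01 (hgH 0) (hgH 1), hpop, ← mul_sub, abs_mul,
    abs_of_pos (by positivity)]
  gcongr
  calc _ ≤ _ := abs_sub_le _ (empiricalMean ζ n ω fun x => eventWeight W x * H x.2.1) _
    _ ≤ 2 * η + 1 / (n - 1) + η := add_le_add hU hweight
    _ = 3 * η + 1 / (n - 1) := by ring

end Survival

theorem stmt_3_general {Ω : Type*} [MeasurableSpace Ω] (P : Measure Ω) [IsProbabilityMeasure P]
    {E : Type*} [MeasurableSpace E]
    (Tmax : ℝ)
    (ζ : ℕ → Ω → E × ℝ × ℝ)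
    (hmeas : ∀ i, Measurable (ζ i))
    (hident : ∀ i, P.map (ζ i) = P.map (ζ 0))
    (hindep : iIndepFun ζ P)
    (hTrange : ∀ i ω, (ζ i ω).2.1 ∈ Set.Ico (0 : ℝ) Tmax)
    (ε : ℝ) (hε : 0 < ε) :
    ∀ᵐ ω ∂P, Tendsto (fun n : ℕ =>
        ⨆ g : {g : ℝ → ℝ // memG ε Tmax g},
          |(2 / (n * (n - 1) : ℝ)) *
              (∑ i ∈ Finset.range n, ∑ j ∈ Finset.range n,
                if i < j then psibar g.1 (ζ i ω) (ζ j ω) else 0) -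
            ∫ ω' , psibar g.1 (ζ 0 ω') (ζ 1 ω') ∂P|)
      atTop (nhds 0) := by
  have hpair : Pairwise fun i j => IndepFun (ζ i) (ζ j) P := fun i j hij => hindep.indepFun hij
  have hlaw : ∀ i, IdentDistrib (ζ i) (ζ 0) P P := fun i =>
    ⟨(hmeas i).aemeasurable, (hmeas 0).aemeasurable, hident i⟩
  have : IsProbabilityMeasure (P.map (ζ 0)) :=
    Measure.isProbabilityMeasure_map (hmeas 0).aemeasurable
  filter_upwards [ae_tendstoUniformly_empiricalMean_atRisk hpair hlaw,
    ae_tendstoUniformlyOn_monotone hpair hlaw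
      (measurable_eventWeight (antitone_obsSurvival (P.map (ζ 0))).measurable)
      (eventWeight_mem_Icc (obsSurvival_mem_Icc (P.map (ζ 0)))) measurable_snd.fst] with ω hRω hWω
  refine tendsto_iSup_abs_sub_of_tendstoUniformly (Metric.tendstoUniformly_iff.2 fun δ hδ => ?_)
  rw [Metric.tendstoUniformly_iff] at hRω
  rw [Metric.tendstoUniformlyOn_iff] at hWω
  set η := ε ^ 2 * δ / 8
  have hη : 0 < η := by positivity
  filter_upwards [hRω η hη, hWω η hη, eventually_ge_atTop 2,
    tendsto_natCast_atTop_atTop.eventually_ge_atTop (1 / η + 1)] with n hRn hWn hn hnη g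
  obtain ⟨H, hH, hH01, hgH⟩ := exists_monotone_eq_div_sq_of_memG hε g.2
  have hbound := abs_uStat_psibar_sub_integral_le hmeas (hident 1) (hindep.indepFun zero_ne_one)
    hε.ne' hH.measurable hH01 (fun i ω => (hgH (hTrange i ω)).symm) hn
    (fun t => by rw [abs_sub_comm, ← Real.dist_eq]; exact (hRn t).le)
    (by rw [abs_sub_comm, ← Real.dist_eq]; exact (hWn H ⟨hH, hH01⟩).le)
  have hn1 : 1 / ((n : ℝ) - 1) ≤ η := by
    simpa using one_div_le_one_div_of_le (by positivity) (le_sub_iff_add_le.2 hnη)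
  rw [dist_comm, Real.dist_eq]
  calc _ ≤ (ε ^ 2)⁻¹ * (3 * η + 1 / (n - 1)) := hbound
    _ ≤ (ε ^ 2)⁻¹ * (4 * η) := by gcongr; linarith
    _ = δ / 2 := by simp only [η]; field_simp; ring
    _ < δ := half_lt_self hδ

/-- **Uniform a.s. convergence of the symmetrised denominator of time-dependent Uno's
C-index over the class `𝒢_ε`.**  `ζ i = (Zᵢ, Tᵢ, Dᵢ)` is an i.i.d. sequence of
(covariate, event time, censoring time) triples with `D₁` independent of `(Z₁, T₁)`,
all event times lying in `[0, Tmax)`.  Then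
`sup_{g ∈ 𝒢_ε} |(2/(n(n−1))) Σ_{i<j} ψ̄^g(xᵢ, xⱼ) − E[ψ̄^g(x₁, x₂)]| → 0` a.s. -/
theorem stmt_3 {Ω : Type*} [MeasurableSpace Ω] (P : Measure Ω) [IsProbabilityMeasure P]
    {E : Type*} [MeasurableSpace E]
    (S : ℝ → E → ℝ) (hSmeas : Measurable fun p : ℝ × E => S p.1 p.2)
    (hS01 : ∀ t z, S t z ∈ Set.Icc (0 : ℝ) 1)
    (Tmax : ℝ) (hTmax : 0 < Tmax)
    (ζ : ℕ → Ω → E × ℝ × ℝ)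
    (hmeas : ∀ i, Measurable (ζ i))
    (hident : ∀ i, P.map (ζ i) = P.map (ζ 0))
    (hindep : iIndepFun ζ P)
    (hTrange : ∀ i ω, (ζ i ω).2.1 ∈ Set.Ico (0 : ℝ) Tmax)
    (hDnonneg : ∀ i ω, 0 ≤ (ζ i ω).2.2)
    (hDindep : IndepFun (fun ω => ((ζ 0 ω).1, (ζ 0 ω).2.1)) (fun ω => (ζ 0 ω).2.2) P)
    (ε : ℝ) (hε : 0 < ε) :
    ∀ᵐ ω ∂P, Tendsto (fun n : ℕ =>
        ⨆ g : {g : ℝ → ℝ // memG ε Tmax g},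
          |(2 / (n * (n - 1) : ℝ)) *
              (∑ i ∈ Finset.range n, ∑ j ∈ Finset.range n,
                if i < j then psibar g.1 (ζ i ω) (ζ j ω) else 0) -
            ∫ ω' , psibar g.1 (ζ 0 ω') (ζ 1 ω') ∂P|)
      atTop (nhds 0) :=
  stmt_3_general P Tmax ζ hmeas hident hindep hTrange ε hε
end

section
/- Let T be a nonnegative random variable, Z a random element of a measurable space E, W a random element of a measurable space F, and D a nonnegative random variable independent of (T, Z, W), with tail distribution function G(t) = P(D > t). Assume G(T) > 0 almost surely. Then the conditional expectation of 1{T < D} / G(T) given the σ-algebra generated by (T, Z, W) equals 1 almost surely. -/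
/-!
By independence, the conditional law of `D` given `X = (T, Z, W)` is the law `ρ` of `D` itself,
so the conditional expectation of a function `f (X, D)` given `X` is `∫ f (X, d) dρ(d)`.
For `f ((t, z, w), d) = 1{t < d} / G t` this integral is `ρ (t, ∞) / G t = 1` wherever `G t > 0`.
-/

open MeasureTheory ProbabilityTheory Filter
open scoped Classical

namespace ProbabilityTheory

variable {Ω α β : Type*} {mΩ : MeasurableSpace Ω} {mα : MeasurableSpace α} [MeasurableSpace β]
  {μ : Measure Ω} [IsFiniteMeasure μ] {X : Ω → α} {Y : Ω → β}

lemma IndepFun.integrable_comp_prod_iff (hX : AEMeasurable X μ) (hY : AEMeasurable Y μ)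
    (h : IndepFun X Y μ) {f : α × β → ℝ}
    (hf : AEStronglyMeasurable f ((μ.map X).prod (μ.map Y))) :
    Integrable (fun ω => f (X ω, Y ω)) μ ↔ Integrable f ((μ.map X).prod (μ.map Y)) := by
  rw [← h.map_prod_eq_prod_map_map hX hY] at hf ⊢
  exact (integrable_map_measure hf (hX.prodMk hY)).symm

variable [StandardBorelSpace β] [Nonempty β]

lemma IndepFun.condDistrib_ae_eq_const (hX : AEMeasurable X μ) (hY : AEMeasurable Y μ)
    (h : IndepFun X Y μ) : condDistrib Y X μ =ᵐ[μ.map X] Kernel.const α (μ.map Y) := by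
  rw [condDistrib_ae_eq_iff_measure_eq_compProd X hY, Measure.compProd_const]
  exact h.map_prod_eq_prod_map_map hX hY

lemma IndepFun.condExp_comp_prod_ae_eq_integral (hX : Measurable X) (hY : AEMeasurable Y μ)
    (h : IndepFun X Y μ) {f : α × β → ℝ} (hf : StronglyMeasurable f)
    (hf_int : Integrable (fun ω => f (X ω, Y ω)) μ) :
    μ[fun ω => f (X ω, Y ω) | mα.comap X] =ᵐ[μ] fun ω => ∫ y, f (X ω, y) ∂(μ.map Y) := by
  filter_upwards [condExp_prod_ae_eq_integral_condDistrib hX hY hf hf_int,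
    ae_of_ae_map hX.aemeasurable (h.condDistrib_ae_eq_const hX.aemeasurable hY)] with ω hω hκ
  rw [hω, hκ, Kernel.const_apply]

lemma IndepFun.condExp_comp_prod_ae_eq_one (hX : Measurable X) (hY : AEMeasurable Y μ)
    (h : IndepFun X Y μ) {f : α × β → ℝ} (hf : StronglyMeasurable f) (hf_nonneg : 0 ≤ f)
    (hf_sec : ∀ᵐ x ∂μ.map X,
      Integrable (fun y => f (x, y)) (μ.map Y) ∧ ∫ y, f (x, y) ∂μ.map Y = 1) :
    μ[fun ω => f (X ω, Y ω) | mα.comap X] =ᵐ[μ] 1 := by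
  have hf_int : Integrable (fun ω => f (X ω, Y ω)) μ := by
    rw [h.integrable_comp_prod_iff hX.aemeasurable hY hf.aestronglyMeasurable,
      integrable_prod_iff hf.aestronglyMeasurable]
    refine ⟨hf_sec.mono fun x hx => hx.1, (integrable_const 1).congr ?_⟩
    filter_upwards [hf_sec] with x hx
    simp_rw [Real.norm_of_nonneg (hf_nonneg _), hx.2]
  filter_upwards [h.condExp_comp_prod_ae_eq_integral hX hY hf hf_int,
    ae_of_ae_map hX.aemeasurable hf_sec] with ω hω hsec
  rw [hω, hsec.2, Pi.one_apply]

end ProbabilityTheory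

open Set

lemma ite_lt_eq_indicator_Ioi {α M : Type*} [LinearOrder α] [One M] [Zero M] (s d : α) :
    (if s < d then (1 : M) else 0) = (Ioi s).indicator 1 d := by
  simp [indicator_apply]

lemma integrable_ite_lt_div_const (ρ : Measure ℝ) [IsFiniteMeasure ρ] (s c : ℝ) :
    Integrable (fun d => (if s < d then (1 : ℝ) else 0) / c) ρ := by
  simp_rw [ite_lt_eq_indicator_Ioi]
  exact ((integrable_const 1).indicator measurableSet_Ioi).div_const c

lemma integral_ite_lt_div_measureReal_Ioi (ρ : Measure ℝ) [IsFiniteMeasure ρ] {s : ℝ}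
    (hs : ρ.real (Ioi s) ≠ 0) :
    ∫ d, (if s < d then (1 : ℝ) else 0) / ρ.real (Ioi s) ∂ρ = 1 := by
  simp_rw [ite_lt_eq_indicator_Ioi]
  rw [integral_div, integral_indicator_one measurableSet_Ioi, div_self hs]

theorem stmt_5_general {Ω : Type*} [MeasurableSpace Ω] (P : Measure Ω) [IsProbabilityMeasure P]
    {E F : Type*} [MeasurableSpace E] [MeasurableSpace F]
    (T : Ω → ℝ) (Z : Ω → E) (W : Ω → F) (D : Ω → ℝ)
    (hT : Measurable T) (hZ : Measurable Z) (hW : Measurable W) (hD : Measurable D)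
    (hindep : IndepFun (fun ω => (T ω, Z ω, W ω)) D P)
    (G : ℝ → ℝ) (hGdef : ∀ t, G t = (P {ω | t < D ω}).toReal)
    (hGpos : ∀ᵐ ω ∂P, 0 < G (T ω)) :
    P[(fun ω => (if T ω < D ω then (1 : ℝ) else 0) / G (T ω)) |
        MeasurableSpace.comap (fun ω => (T ω, Z ω, W ω)) inferInstance]
      =ᵐ[P] fun _ => 1 := by
  have hX : Measurable fun ω => (T ω, Z ω, W ω) := hT.prodMk (hZ.prodMk hW)
  have hG_eq (t : ℝ) : G t = (P.map D).real (Ioi t) := by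
    rw [hGdef, map_measureReal_apply hD measurableSet_Ioi]; rfl
  have hG : Measurable G := Antitone.measurable fun a b hab => by
    simp only [hG_eq]; exact measureReal_mono (Ioi_subset_Ioi hab)
  have hpos : ∀ᵐ x ∂P.map (fun ω => (T ω, Z ω, W ω)), 0 < G x.1 :=
    (ae_map_iff hX.aemeasurable (measurableSet_lt measurable_const (hG.comp measurable_fst))).2
      hGpos
  refine hindep.condExp_comp_prod_ae_eq_one hX hD.aemeasurable
    (f := fun p => (if p.1.1 < p.2 then 1 else 0) / G p.1.1) ?_ (fun p => ?_) ?_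
  · exact ((measurable_const.ite (measurableSet_lt measurable_fst.fst measurable_snd)
      measurable_const).div (hG.comp measurable_fst.fst)).stronglyMeasurable
  · exact div_nonneg (by split_ifs <;> norm_num) (hG_eq _ ▸ measureReal_nonneg)
  · filter_upwards [hpos] with x hx
    rw [hG_eq] at hx ⊢
    exact ⟨integrable_ite_lt_div_const _ _ _, integral_ite_lt_div_measureReal_Ioi _ hx.ne'⟩

/-- **IPCW identity.** Let `T` be a nonnegative random variable, `Z`, `W` random
elements of measurable spaces `E`, `F`, and `D` a nonnegative random variable
independent of `(T, Z, W)` with tail distribution function `G(t) = P(D > t)`.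
If `G(T) > 0` a.s., then `E[1{T < D}/G(T) | σ(T, Z, W)] = 1` a.s. -/
theorem stmt_5 {Ω : Type*} [MeasurableSpace Ω] (P : Measure Ω) [IsProbabilityMeasure P]
    {E F : Type*} [MeasurableSpace E] [MeasurableSpace F]
    (T : Ω → ℝ) (Z : Ω → E) (W : Ω → F) (D : Ω → ℝ)
    (hT : Measurable T) (hZ : Measurable Z) (hW : Measurable W) (hD : Measurable D)
    (hTnonneg : ∀ ω, 0 ≤ T ω) (hDnonneg : ∀ ω, 0 ≤ D ω)
    (hindep : IndepFun (fun ω => (T ω, Z ω, W ω)) D P)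
    (G : ℝ → ℝ) (hGdef : ∀ t, G t = (P {ω | t < D ω}).toReal)
    (hGpos : ∀ᵐ ω ∂P, 0 < G (T ω)) :
    P[(fun ω => (if T ω < D ω then (1 : ℝ) else 0) / G (T ω)) |
        MeasurableSpace.comap (fun ω => (T ω, Z ω, W ω)) inferInstance]
      =ᵐ[P] fun _ => 1 :=
  stmt_5_general P T Z W D hT hZ hW hD hindep G hGdef hGpos
end

section
/- (Sup-norm covering of monotone functions on a finite grid.) Let ε ∈ (0,1], δ > 0, set M = ⌈ε^{-2}/δ⌉, and let t_1 < t_2 < … < t_N be real numbers. There exist non-decreasing functions w_1, …, w_K : {t_1, …, t_N} → [1, ε^{-2}] with K ≤ (N + 1)^M such that for every non-decreasing function w : {t_1, …, t_N} → [1, ε^{-2}] one has min_{1≤k≤K} max_{1≤r≤N} | w(t_r) − w_k(t_r) | ≤ δ. -/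
open Finset

lemma downset_card_iff {n : ℕ} (P : Fin n → Prop) [DecidablePred P]
    (hP : ∀ i j : Fin n, i ≤ j → P j → P i) (r : Fin n) :
    ((r : ℕ) < (Finset.univ.filter P).card ↔ P r) := by
  constructor
  · intro h
    by_contra hr
    have hsub : Finset.univ.filter P ⊆ Finset.Iio r := by
      intro s hs
      simp only [Finset.mem_filter] at hs
      simp only [Finset.mem_Iio]
      by_contra hlt
      exact hr (hP r s (not_lt.1 hlt) hs.2)
    have hle := Finset.card_le_card hsub
    rw [Fin.card_Iio] at hle
    omega
  · intro h
    have hsub : Finset.Iic r ⊆ Finset.univ.filter P := by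
      intro s hs
      simp only [Finset.mem_Iic] at hs
      exact Finset.mem_filter.2 ⟨Finset.mem_univ _, hP s r hs h⟩
    have hle := Finset.card_le_card hsub
    rw [Fin.card_Iic] at hle
    omega

/-- **Sup-norm covering of monotone functions on a finite grid.**
Let `ε ∈ (0,1]`, `δ > 0`, `M = ⌈ε⁻²/δ⌉`, and `t₁ < … < t_N` real numbers.  There exist
non-decreasing functions `w₁, …, w_K` on the grid with values in `[1, ε⁻²]` and
`K ≤ (N+1)^M` such that every non-decreasing `w : {t₁, …, t_N} → [1, ε⁻²]` satisfies
`min_k max_r |w(t_r) − w_k(t_r)| ≤ δ`.  (Functions on the grid `t₁ < … < t_N` are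
represented by functions on the index set `Fin N`, monotonicity being equivalent via
the strictly increasing enumeration `t`.) -/
theorem stmt_10 (ε δ : ℝ) (hε : ε ∈ Set.Ioc (0 : ℝ) 1) (hδ : 0 < δ)
    (N : ℕ) (t : Fin N → ℝ) (ht : StrictMono t) :
    ∃ (K : ℕ) (w : Fin K → Fin N → ℝ),
      K ≤ (N + 1) ^ ⌈(ε ^ 2)⁻¹ / δ⌉₊ ∧
      (∀ k, Monotone (w k) ∧ ∀ r, w k r ∈ Set.Icc (1 : ℝ) (ε ^ 2)⁻¹) ∧
      ∀ v : Fin N → ℝ, Monotone v → (∀ r, v r ∈ Set.Icc (1 : ℝ) (ε ^ 2)⁻¹) →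
        ∃ k : Fin K, ∀ r, |v r - w k r| ≤ δ := by
  obtain ⟨hε0, hε1⟩ := hε
  set M : ℕ := ⌈(ε ^ 2)⁻¹ / δ⌉₊ with hM
  have hεsq : (0:ℝ) < ε ^ 2 := by positivity
  have hεsq1 : ε ^ 2 ≤ 1 := by nlinarith
  have hone : (1:ℝ) ≤ (ε ^ 2)⁻¹ := by
    rw [le_inv_comm₀ (by norm_num) hεsq]; simpa using hεsq1
  have hMb : (ε ^ 2)⁻¹ ≤ δ * M := by
    have : (ε ^ 2)⁻¹ / δ ≤ (M : ℝ) := Nat.le_ceil _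
    calc (ε ^ 2)⁻¹ = δ * ((ε ^ 2)⁻¹ / δ) := by field_simp
    _ ≤ δ * M := by nlinarith
  -- candidate functions indexed by threshold vectors
  set W : (Fin M → Fin (N + 1)) → Fin N → ℝ :=
    fun c r => min ((ε ^ 2)⁻¹)
      (1 + δ * (Finset.univ.filter (fun j : Fin M => (c j : ℕ) ≤ (r : ℕ))).card) with hW
  have hcard : Fintype.card (Fin M → Fin (N + 1)) = (N + 1) ^ M := by simp
  let e := Fintype.equivFinOfCardEq hcard
  refine ⟨(N + 1) ^ M, fun k => W (e.symm k), le_refl _, ?_, ?_⟩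
  · intro k
    constructor
    · intro r s hrs
      refine min_le_min le_rfl ?_
      have : (Finset.univ.filter (fun j : Fin M => ((e.symm k) j : ℕ) ≤ (r : ℕ))) ⊆
          (Finset.univ.filter (fun j : Fin M => ((e.symm k) j : ℕ) ≤ (s : ℕ))) := by
        intro j hj
        simp only [Finset.mem_filter] at *
        exact ⟨hj.1, hj.2.trans hrs⟩
      have hcc : ((Finset.univ.filter (fun j : Fin M => ((e.symm k) j : ℕ) ≤ (r : ℕ))).card : ℝ) ≤
          ((Finset.univ.filter (fun j : Fin M => ((e.symm k) j : ℕ) ≤ (s : ℕ))).card : ℝ) := by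
        exact_mod_cast Finset.card_le_card this
      nlinarith [hδ.le]
    · intro r
      constructor
      · refine le_min hone ?_
        have : (0:ℝ) ≤ δ * (Finset.univ.filter
            (fun j : Fin M => ((e.symm k) j : ℕ) ≤ (r : ℕ))).card := by positivity
        linarith
      · exact min_le_left _ _
  · intro v hv hvr
    -- thresholds: c j = number of r with v r < 1 + δ(j+1)
    have hcd : ∀ j : Fin M,
        (Finset.univ.filter (fun r : Fin N => v r < 1 + δ * ((j:ℕ)+1))).card ≤ N := by
      intro j
      simpa using Finset.card_le_card
        (Finset.filter_subset (fun r : Fin N => v r < 1 + δ * ((j:ℕ)+1)) Finset.univ)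
    set c : Fin M → Fin (N + 1) := fun j =>
      ⟨(Finset.univ.filter (fun r : Fin N => v r < 1 + δ * ((j:ℕ)+1))).card,
        Nat.lt_succ_of_le (hcd j)⟩ with hc
    refine ⟨e c, ?_⟩
    intro r
    show |v r - W (e.symm (e c)) r| ≤ δ
    rw [Equiv.symm_apply_apply]
    -- key: (c j ≤ r) ↔ 1 + δ(j+1) ≤ v r
    have hkey : ∀ j : Fin M, ((c j : ℕ) ≤ (r : ℕ)) ↔ 1 + δ * ((j:ℕ)+1) ≤ v r := by
      intro j
      have := downset_card_iff (fun s : Fin N => v s < 1 + δ * ((j:ℕ)+1))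
        (fun i s his hs => lt_of_le_of_lt (hv his) hs) r
      simp only [hc, not_lt.symm]
      rw [not_iff_not]
      exact this
    set n : ℕ := (Finset.univ.filter (fun j : Fin M => 1 + δ * ((j:ℕ)+1) ≤ v r)).card with hn
    have hfe : (Finset.univ.filter (fun j : Fin M => (c j : ℕ) ≤ (r : ℕ))) =
        (Finset.univ.filter (fun j : Fin M => 1 + δ * ((j:ℕ)+1) ≤ v r)) := by
      apply Finset.filter_congr
      intro j _
      simp [hkey j]
    have hnM : n ≤ M := by
      simpa [hn] using Finset.card_le_card
        (Finset.filter_subset (fun j : Fin M => 1 + δ * ((j:ℕ)+1) ≤ v r) Finset.univ)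
    -- lower bound : 1 + δ n ≤ v r
    have hlow : 1 + δ * n ≤ v r := by
      rcases Nat.eq_zero_or_pos n with h0 | hpos
      · simpa [h0] using (hvr r).1
      · have hjlt : n - 1 < M := by omega
        have hmem : (1:ℝ) + δ * (((⟨n-1, hjlt⟩ : Fin M) : ℕ) + 1) ≤ v r := by
          have := (downset_card_iff (fun j : Fin M => 1 + δ * ((j:ℕ)+1) ≤ v r)
            (fun i j hij hj => by
              have : (i:ℕ) ≤ (j:ℕ) := hij
              have hij2 : ((i:ℕ):ℝ) ≤ ((j:ℕ):ℝ) := by exact_mod_cast this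
              nlinarith [hδ.le]) ⟨n-1, hjlt⟩).1
          apply this
          simp only [← hn]
          omega
        have : ((n:ℝ) - 1) + 1 = (n:ℝ) := by ring
        have hcast : (((⟨n-1, hjlt⟩ : Fin M) : ℕ) : ℝ) + 1 = (n : ℝ) := by
          simp only [Fin.val_mk]
          have : (1:ℕ) ≤ n := hpos
          push_cast [Nat.cast_sub this]
          ring
        rw [hcast] at hmem
        exact hmem
    -- upper bound : v r ≤ 1 + δ n + δ  (in fact v r < 1 + δ(n+1) or n = M)
    have hup : v r ≤ 1 + δ * n + δ := by
      rcases lt_or_ge n M with hlt | hge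
      · have hnot : ¬ (1 + δ * (((⟨n, hlt⟩ : Fin M) : ℕ) + 1) ≤ v r) := by
          intro hmem
          have := (downset_card_iff (fun j : Fin M => 1 + δ * ((j:ℕ)+1) ≤ v r)
            (fun i j hij hj => by
              have : (i:ℕ) ≤ (j:ℕ) := hij
              have hij2 : ((i:ℕ):ℝ) ≤ ((j:ℕ):ℝ) := by exact_mod_cast this
              nlinarith [hδ.le]) ⟨n, hlt⟩).2 hmem
          simp only [← hn, Fin.val_mk] at this
          omega
        push_neg at hnot
        simp only [Fin.val_mk] at hnot
        nlinarith [hnot]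
      · have hnM' : n = M := le_antisymm hnM hge
        have h1 : v r ≤ (ε ^ 2)⁻¹ := (hvr r).2
        have : (M:ℝ) = (n:ℝ) := by exact_mod_cast hnM'.symm
        nlinarith [hMb, hδ.le]
    -- the min is attained by the linear part
    have hval : W c r = 1 + δ * n := by
      rw [hW]
      simp only [hfe, ← hn]
      apply min_eq_right
      linarith [(hvr r).2]
    rw [hval]
    rw [abs_le]
    constructor <;> linarith
end

section
/- (Finite L¹ covering number of the monotone class.) Let Tmax > 0, B ≥ 1, δ > 0, and let ν be a finite Borel measure on [0, Tmax). There exist finitely many non-decreasing functions w_1, …, w_K : [0, Tmax) → [1, B] such that every non-decreasing function w : [0, Tmax) → [1, B] satisfies min_{1≤k≤K} ∫_{[0,Tmax)} | w − w_k | dν ≤ δ. -/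
/-!
Quantise the range: a non-decreasing `v` with values in `[1, B]` is within `ε` of
`1 + ε ∑ₖ 1_{S k}`, where `S k = {v ≥ 1 + (k + 1) ε}`. The sets `S k` are relative upper sets of
the domain, which in a linear order form a chain; and a chain of sets is totally bounded for
`ν (s ∆ t)`, because there this distance is just `|ν s - ν t|`. Replacing each `S k` by a member
of a finite net of the chain leaves finitely many monotone candidates.
-/

open MeasureTheory Set
open scoped symmDiff

section Order

variable {α : Type*}

theorem IsRelUpperSet.subset_or_subset [LinearOrder α] {P : α → Prop} {s t : Set α}
    (hs : IsRelUpperSet s P) (ht : IsRelUpperSet t P) : s ⊆ t ∨ t ⊆ s := by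
  by_contra! h
  obtain ⟨⟨a, has, hat⟩, ⟨b, hbt, hbs⟩⟩ := And.imp not_subset.1 not_subset.1 h
  rcases le_total a b with hab | hba
  · exact hbs (hs.mem_of_le has hab (ht.prop_of_mem hbt))
  · exact hat (ht.mem_of_le hbt hba (hs.prop_of_mem has))

theorem isChain_setOf_isRelUpperSet [LinearOrder α] (P : α → Prop) :
    IsChain (· ⊆ ·) {s : Set α | IsRelUpperSet s P} :=
  fun _ hs _ ht _ => IsRelUpperSet.subset_or_subset hs ht

theorem MonotoneOn.isRelUpperSet_sep_le [Preorder α] {D : Set α} {v : α → ℝ}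
    (hv : MonotoneOn v D) (c : ℝ) : IsRelUpperSet {t ∈ D | c ≤ v t} (· ∈ D) :=
  fun _ ha => ⟨ha.1, fun _ hab hb => ⟨hb, ha.2.trans (hv ha.1 hb hab)⟩⟩

theorem IsRelUpperSet.monotoneOn_indicator_one [Preorder α] {D s : Set α}
    (hs : IsRelUpperSet s (· ∈ D)) : MonotoneOn (s.indicator (1 : α → ℝ)) D := by
  intro a _ b hb hab
  by_cases ha : a ∈ s
  · simp [ha, hs.mem_of_le ha hab hb]
  · simp only [indicator_of_notMem ha]
    exact indicator_nonneg (fun _ _ => zero_le_one) b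

theorem IsRelUpperSet.eq_inter_upperClosure [Preorder α] {D s : Set α}
    (hs : IsRelUpperSet s (· ∈ D)) : s = D ∩ upperClosure s := by
  refine Subset.antisymm (fun a ha => ⟨hs.prop_of_mem ha, subset_upperClosure ha⟩) ?_
  rintro b ⟨hbD, hb⟩
  obtain ⟨a, ha, hab⟩ := mem_upperClosure.1 hb
  exact hs.mem_of_le ha hab hbD

theorem IsRelUpperSet.measurableSet [LinearOrder α] [TopologicalSpace α] [OrderClosedTopology α]
    [MeasurableSpace α] [OpensMeasurableSpace α] {D s : Set α} (hD : MeasurableSet D)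
    (hs : IsRelUpperSet s (· ∈ D)) : MeasurableSet s := by
  rw [hs.eq_inter_upperClosure]
  exact hD.inter (upperClosure s).upper.ordConnected.measurableSet

end Order

section Measure

variable {α : Type*} [MeasurableSpace α] {μ : Measure α} [IsFiniteMeasure μ]

theorem measureReal_symmDiff_eq_abs_sub {s t : Set α} (hst : s ⊆ t ∨ t ⊆ s)
    (hs : MeasurableSet s) (ht : MeasurableSet t) : μ.real (s ∆ t) = |μ.real s - μ.real t| := by
  rcases hst with h | h
  · rw [symmDiff_of_le h, measureReal_sdiff h hs, abs_sub_comm,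
      abs_of_nonneg (sub_nonneg.2 (measureReal_mono h))]
  · rw [symmDiff_of_ge h, measureReal_sdiff h ht, abs_of_nonneg (sub_nonneg.2 (measureReal_mono h))]

/-- Members of the chain whose measures fall into the same interval `[nη, (n + 1)η)` are
comparable, hence `η`-close. -/
theorem exists_finite_net_of_isChain {𝒞 : Set (Set α)} (hchain : IsChain (· ⊆ ·) 𝒞)
    (hmeas : ∀ s ∈ 𝒞, MeasurableSet s) {η : ℝ} (hη : 0 < η) :
    ∃ 𝒩 ⊆ 𝒞, 𝒩.Finite ∧ ∀ s ∈ 𝒞, ∃ t ∈ 𝒩, μ.real (s ∆ t) < η := by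
  set f : Set α → ℤ := fun s => ⌊μ.real s / η⌋
  have hfin : (f '' 𝒞).Finite := by
    refine (finite_Icc 0 ⌊μ.real univ / η⌋).subset (image_subset_iff.2 fun s _ => ?_)
    exact ⟨Int.floor_nonneg.2 (div_nonneg measureReal_nonneg hη.le),
      Int.floor_mono (div_le_div_of_nonneg_right (measureReal_mono (subset_univ s)) hη.le)⟩
  choose! g hg𝒞 hgf using fun n (hn : n ∈ f '' 𝒞) => hn
  refine ⟨g '' (f '' 𝒞), image_subset_iff.2 hg𝒞, hfin.image g, fun s hs => ?_⟩
  have hfs : f (g (f s)) = f s := hgf _ (mem_image_of_mem f hs)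
  refine ⟨g (f s), mem_image_of_mem g (mem_image_of_mem f hs), ?_⟩
  have hclose := Int.abs_sub_lt_one_of_floor_eq_floor hfs.symm
  rw [← sub_div, abs_div, abs_of_pos hη, div_lt_one hη] at hclose
  have hg := hg𝒞 _ (mem_image_of_mem f hs)
  rwa [measureReal_symmDiff_eq_abs_sub (hchain.total hs hg) (hmeas s hs) (hmeas _ hg)]

end Measure

theorem abs_sub_mul_sum_ite_lt {ε x : ℝ} {M : ℕ} (hε : 0 < ε) (hx : 0 ≤ x)
    (hxM : x < (M + 1) * ε) :
    |x - ε * ∑ k : Fin M, if ((k : ℝ) + 1) * ε ≤ x then (1 : ℝ) else 0| < ε := by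
  set n := ⌊x / ε⌋₊
  have hxε : 0 ≤ x / ε := div_nonneg hx hε.le
  have hiff : ∀ k : ℕ, ((k : ℝ) + 1) * ε ≤ x ↔ k < n := fun k => by
    rw [← le_div_iff₀ hε, Nat.lt_iff_add_one_le, Nat.le_floor_iff hxε]
    push_cast
    rfl
  have hnM : n ≤ M := Nat.lt_succ_iff.1 <| (Nat.floor_lt hxε).2 <| by
    push_cast
    rwa [div_lt_iff₀ hε]
  have hcount : (∑ k : Fin M, if ((k : ℝ) + 1) * ε ≤ x then (1 : ℝ) else 0) = n := by
    rw [Fin.sum_univ_eq_sum_range (fun k => if ((k : ℝ) + 1) * ε ≤ x then (1 : ℝ) else 0) M]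
    simp_rw [hiff, Finset.sum_boole]
    rw [show {k ∈ Finset.range M | k < n} = Finset.range n by ext; simp; omega,
      Finset.card_range]
  have hlo : ε * n ≤ x := by
    rw [← le_div_iff₀' hε]
    exact Nat.floor_le hxε
  have hhi : x < ε * n + ε := by
    have := Nat.lt_floor_add_one (x / ε)
    rw [div_lt_iff₀ hε] at this
    linarith
  rw [hcount, abs_of_nonneg (sub_nonneg.2 hlo)]
  linarith

section Stairs

variable {α : Type*} {M : ℕ}

noncomputable def stairs (ε : ℝ) (U : Fin M → Set α) (t : α) : ℝ :=
  1 + ε * ∑ k, (U k).indicator 1 t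

theorem stairs_mem_Icc {ε B : ℝ} (hε : 0 ≤ ε) (hMB : M * ε ≤ B - 1) (U : Fin M → Set α)
    (t : α) : stairs ε U t ∈ Icc 1 B := by
  have hsum_nonneg : 0 ≤ ∑ k, (U k).indicator (1 : α → ℝ) t :=
    Finset.sum_nonneg fun k _ => indicator_nonneg (fun _ _ => zero_le_one) t
  have hsum_le : ∑ k, (U k).indicator (1 : α → ℝ) t ≤ M := by
    calc ∑ k, (U k).indicator (1 : α → ℝ) t ≤ ∑ _k : Fin M, (1 : ℝ) :=
          Finset.sum_le_sum fun k _ => indicator_le_self' (fun _ _ => zero_le_one) t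
      _ = M := by simp
  constructor <;>
  · unfold stairs
    nlinarith

theorem monotoneOn_stairs [Preorder α] {D : Set α} {ε : ℝ} (hε : 0 ≤ ε) {U : Fin M → Set α}
    (hU : ∀ k, IsRelUpperSet (U k) (· ∈ D)) : MonotoneOn (stairs ε U) D := by
  intro a ha b hb hab
  unfold stairs
  gcongr with k
  exact (hU k).monotoneOn_indicator_one ha hb hab

theorem abs_stairs_sub_stairs_le {ε : ℝ} (hε : 0 ≤ ε) (S U : Fin M → Set α) (t : α) :
    |stairs ε S t - stairs ε U t| ≤ ε * ∑ k, (S k ∆ U k).indicator 1 t := by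
  have : stairs ε S t - stairs ε U t = ε * ∑ k, ((S k).indicator 1 t - (U k).indicator 1 t) := by
    simp only [stairs, Finset.sum_sub_distrib]
    ring
  rw [this, abs_mul, abs_of_nonneg hε]
  gcongr
  refine (Finset.abs_sum_le_sum_abs _ _).trans (le_of_eq ?_)
  refine Finset.sum_congr rfl fun k _ => ?_
  rw [← abs_indicator_symmDiff]
  exact abs_of_nonneg (indicator_nonneg (fun _ _ => zero_le_one) t)

theorem abs_sub_stairs_levelSets_lt {D : Set α} {v : α → ℝ} {ε B : ℝ} (hε : 0 < ε)
    (hv : MapsTo v D (Icc 1 B)) (hMB : B - 1 < (M + 1) * ε) {t : α} (ht : t ∈ D) :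
    |v t - stairs ε (fun k : Fin M => {s ∈ D | 1 + (k + 1) * ε ≤ v s}) t| < ε := by
  have := abs_sub_mul_sum_ite_lt (M := M) hε (sub_nonneg.2 (hv ht).1)
    (lt_of_le_of_lt (by linarith [(hv ht).2]) hMB)
  have hlevel : ∀ k : Fin M, {s ∈ D | 1 + (k + 1) * ε ≤ v s}.indicator (1 : α → ℝ) t =
      if ((k : ℝ) + 1) * ε ≤ v t - 1 then 1 else 0 := fun k => by
    classical
    rw [indicator_apply]
    exact if_congr ⟨fun hs => by linarith [hs.2], fun h => ⟨ht, by linarith⟩⟩ rfl rfl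
  simpa only [stairs, hlevel, sub_add_eq_sub_sub] using this

end Stairs

section Cover

variable {α : Type*} [MeasurableSpace α] {M : ℕ}

theorem integral_abs_sub_stairs_le (ν : Measure α) [IsFiniteMeasure ν] {D : Set α}
    (hD : MeasurableSet D) {v : α → ℝ} {ε : ℝ} (hε : 0 ≤ ε) {S U : Fin M → Set α}
    (hS : ∀ k, MeasurableSet (S k)) (hU : ∀ k, MeasurableSet (U k))
    (hvS : ∀ t ∈ D, |v t - stairs ε S t| ≤ ε) :
    ∫ t in D, |v t - stairs ε U t| ∂ν ≤
      ε * ν.real D + ε * ∑ k, (ν.restrict D).real (S k ∆ U k) := by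
  have hint : ∀ k, Integrable ((S k ∆ U k).indicator (1 : α → ℝ)) (ν.restrict D) := fun k =>
    (integrable_const 1).indicator ((hS k).symmDiff (hU k))
  have hsum_int : Integrable (fun t => ε * ∑ k, (S k ∆ U k).indicator (1 : α → ℝ) t)
      (ν.restrict D) :=
    (integrable_finsetSum _ fun k _ => hint k).const_mul ε
  have hpointwise : ∀ t ∈ D,
      |v t - stairs ε U t| ≤ ε + ε * ∑ k, (S k ∆ U k).indicator (1 : α → ℝ) t := fun t ht =>
    calc |v t - stairs ε U t| ≤ |v t - stairs ε S t| + |stairs ε S t - stairs ε U t| :=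
          abs_sub_le _ _ _
      _ ≤ _ := add_le_add (hvS t ht) (abs_stairs_sub_stairs_le hε S U t)
  calc ∫ t in D, |v t - stairs ε U t| ∂ν
      ≤ ∫ t in D, (ε + ε * ∑ k, (S k ∆ U k).indicator (1 : α → ℝ) t) ∂ν := by
        exact integral_mono_of_nonneg (ae_of_all _ fun t => abs_nonneg _)
          ((integrable_const ε).add hsum_int) (ae_restrict_of_forall_mem hD hpointwise)
    _ = ε * ν.real D + ε * ∑ k, (ν.restrict D).real (S k ∆ U k) := by
        rw [integral_add (integrable_const ε) hsum_int, integral_const, integral_const_mul,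
          integral_finsetSum _ fun k _ => hint k,
          Finset.sum_congr rfl fun k _ => integral_indicator_one ((hS k).symmDiff (hU k)),
          measureReal_restrict_apply_univ, smul_eq_mul, mul_comm]

end Cover

theorem exists_finite_integral_abs_sub_le_of_monotoneOn {α : Type*} [LinearOrder α]
    [TopologicalSpace α] [OrderClosedTopology α] [MeasurableSpace α] [OpensMeasurableSpace α]
    (ν : Measure α) [IsFiniteMeasure ν] {D : Set α} (hD : MeasurableSet D) {B δ : ℝ}
    (hB : 1 ≤ B) (hδ : 0 < δ) :
    ∃ 𝒲 : Set (α → ℝ), 𝒲.Finite ∧ (∀ w ∈ 𝒲, MonotoneOn w D ∧ MapsTo w D (Icc 1 B)) ∧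
      ∀ v, MonotoneOn v D → MapsTo v D (Icc 1 B) → ∃ w ∈ 𝒲, ∫ t in D, |v t - w t| ∂ν ≤ δ := by
  set ε := δ / (2 * (ν.real D + 1))
  set η := δ / (2 * B)
  have hε : 0 < ε := by positivity
  set M := ⌊(B - 1) / ε⌋₊
  have hMε : M * ε ≤ B - 1 :=
    (le_div_iff₀ hε).1 (Nat.floor_le (div_nonneg (sub_nonneg.2 hB) hε.le))
  have hMε' : B - 1 < (M + 1) * ε := (div_lt_iff₀ hε).1 (Nat.lt_floor_add_one _)
  have hεD : ε * ν.real D ≤ δ / 2 := by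
    rw [div_mul_eq_mul_div, div_le_div_iff₀ (by positivity) two_pos]
    nlinarith [measureReal_nonneg (μ := ν) (s := D)]
  have hMεη : M * ε * η ≤ δ / 2 := by
    calc M * ε * η ≤ (B - 1) * η := by gcongr
      _ ≤ B * η := by gcongr; linarith
      _ = δ / 2 := by simp only [η]; field_simp
  obtain ⟨𝒩, h𝒩𝒞, h𝒩fin, h𝒩⟩ := exists_finite_net_of_isChain (μ := ν.restrict D)
    (isChain_setOf_isRelUpperSet (· ∈ D)) (fun _ hs => IsRelUpperSet.measurableSet hD hs)
    (show 0 < η by positivity)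
  refine ⟨stairs ε '' univ.pi fun _ : Fin M => 𝒩, (Finite.pi fun _ => h𝒩fin).image _, ?_,
    fun v hv hvB => ?_⟩
  · rintro _ ⟨U, hU, rfl⟩
    exact ⟨monotoneOn_stairs hε.le fun k => h𝒩𝒞 (hU k (mem_univ k)),
      fun t _ => stairs_mem_Icc hε.le hMε U t⟩
  set S : Fin M → Set α := fun k => {s ∈ D | 1 + (k + 1) * ε ≤ v s}
  have hS : ∀ k, IsRelUpperSet (S k) (· ∈ D) := fun k => hv.isRelUpperSet_sep_le _
  choose U hU𝒩 hSU using fun k => h𝒩 (S k) (hS k)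
  refine ⟨stairs ε U, mem_image_of_mem _ fun k _ => hU𝒩 k, ?_⟩
  calc ∫ t in D, |v t - stairs ε U t| ∂ν
      ≤ ε * ν.real D + ε * ∑ k, (ν.restrict D).real (S k ∆ U k) :=
        integral_abs_sub_stairs_le ν hD hε.le (fun k => (hS k).measurableSet hD)
          (fun k => (h𝒩𝒞 (hU𝒩 k)).measurableSet hD)
          (fun t ht => (abs_sub_stairs_levelSets_lt hε hvB hMε' ht).le)
    _ ≤ ε * ν.real D + ε * (M * η) := by
        gcongr
        exact (Finset.sum_le_sum fun k _ => (hSU k).le).trans_eq (by simp)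
    _ ≤ δ := by linarith

theorem stmt_11_general (Tmax B δ : ℝ) (hB : 1 ≤ B) (hδ : 0 < δ)
    (ν : Measure ℝ) [IsFiniteMeasure ν] :
    ∃ (K : ℕ) (w : Fin K → ℝ → ℝ),
      (∀ k, MonotoneOn (w k) (Set.Ico (0 : ℝ) Tmax) ∧
        ∀ t ∈ Set.Ico (0 : ℝ) Tmax, w k t ∈ Set.Icc (1 : ℝ) B) ∧
      ∀ v : ℝ → ℝ, MonotoneOn v (Set.Ico (0 : ℝ) Tmax) →
        (∀ t ∈ Set.Ico (0 : ℝ) Tmax, v t ∈ Set.Icc (1 : ℝ) B) →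
        ∃ k : Fin K, ∫ t in Set.Ico (0 : ℝ) Tmax, |v t - w k t| ∂ν ≤ δ := by
  obtain ⟨𝒲, h𝒲fin, h𝒲, hcover⟩ :=
    exists_finite_integral_abs_sub_le_of_monotoneOn ν measurableSet_Ico hB hδ
  set e := h𝒲fin.toFinset.equivFin
  refine ⟨h𝒲fin.toFinset.card, fun k => e.symm k, fun k => ?_, fun v hv hvB => ?_⟩
  · exact h𝒲 _ (h𝒲fin.mem_toFinset.1 (e.symm k).2)
  · obtain ⟨w, hw, hvw⟩ := hcover v hv fun t ht => hvB t ht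
    exact ⟨e ⟨w, h𝒲fin.mem_toFinset.2 hw⟩, by simpa using hvw⟩

/-- **Finite L¹ covering number of the monotone class.**
Let `Tmax > 0`, `B ≥ 1`, `δ > 0` and `ν` a finite Borel measure on `[0, Tmax)`.
There exist finitely many non-decreasing functions `w₁, …, w_K : [0, Tmax) → [1, B]`
such that every non-decreasing `w : [0, Tmax) → [1, B]` satisfies
`min_k ∫_{[0,Tmax)} |w − w_k| dν ≤ δ`. -/
theorem stmt_11 (Tmax B δ : ℝ) (hTmax : 0 < Tmax) (hB : 1 ≤ B) (hδ : 0 < δ)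
    (ν : Measure ℝ) [IsFiniteMeasure ν] :
    ∃ (K : ℕ) (w : Fin K → ℝ → ℝ),
      (∀ k, MonotoneOn (w k) (Set.Ico (0 : ℝ) Tmax) ∧
        ∀ t ∈ Set.Ico (0 : ℝ) Tmax, w k t ∈ Set.Icc (1 : ℝ) B) ∧
      ∀ v : ℝ → ℝ, MonotoneOn v (Set.Ico (0 : ℝ) Tmax) →
        (∀ t ∈ Set.Ico (0 : ℝ) Tmax, v t ∈ Set.Icc (1 : ℝ) B) →
        ∃ k : Fin K, ∫ t in Set.Ico (0 : ℝ) Tmax, |v t - w k t| ∂ν ≤ δ :=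
  stmt_11_general Tmax B δ hB hδ ν
end

section
/- (L¹ approximation of monotone functions by functions constant on a fixed partition.) Let Tmax > 0, δ' > 0 and let ν be a finite Borel measure on [0, Tmax). There exist finitely many points a_1 < … < a_M in [0, Tmax) and finitely many pairwise disjoint intervals I_1, …, I_L with ν(I_l) ≤ δ' for every l, such that {a_1, …, a_M} ∪ I_1 ∪ … ∪ I_L = [0, Tmax), and such that for every B ≥ 1 and every non-decreasing function w : [0, Tmax) → [1, B], the function w̃ defined by w̃(a_m) = w(a_m) for each m and w̃(t) = inf_{s ∈ I_l} w(s) for t ∈ I_l satisfies ∫_{[0,Tmax)} | w − w̃ | dν ≤ B·δ'. -/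
open MeasureTheory Set
open scoped ENNReal

/-!
Cut `[0, Tmax)` at the quantiles `t_k` of `ν`, the first points where the mass of `[0, t)`
reaches `k δ'`. By inner regularity the open gap between consecutive quantiles has mass at most
`δ'`, and the quantiles themselves become the points `a_m`. On a gap, `|w - w̃|` is bounded by
the oscillation of `w` there; since `w` is monotone and the gaps are ordered, these oscillations
add up to at most `B - 1`.
-/

lemma measure_Ioo_le_of_forall_Icc_le {ν : Measure ℝ} [ν.Regular] {u v : ℝ} {c : ℝ≥0∞}
    (h : ∀ s r, u < s → r < v → ν (Icc s r) ≤ c) : ν (Ioo u v) ≤ c := by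
  by_contra! hlt
  obtain ⟨C, hCsub, hC, hcC⟩ := isOpen_Ioo.exists_lt_isCompact hlt
  rcases C.eq_empty_or_nonempty with rfl | hne
  · simp at hcC
  have hCIcc : ν C ≤ ν (Icc (sInf C) (sSup C)) :=
    measure_mono (subset_Icc_csInf_csSup hC.bddBelow hC.bddAbove)
  exact (hCIcc.trans (h _ _ (hCsub (hC.sInf_mem hne)).1 (hCsub (hC.sSup_mem hne)).2)).not_gt hcC

section IcoQuantile

variable {ν : Measure ℝ} {a b : ℝ}

variable (ν a b) in
/-- The first point of `[a, b]` at which `s ↦ ν [a, s)` reaches `c`, and `b` if there is none;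
inserting `b` keeps the infimum away from the junk value `sInf ∅ = 0`. -/
noncomputable def icoQuantile (c : ℝ≥0∞) : ℝ :=
  sInf (insert b {s ∈ Icc a b | c ≤ ν (Ico a s)})

lemma bddBelow_icoQuantile_set (c : ℝ≥0∞) :
    BddBelow (insert b {s ∈ Icc a b | c ≤ ν (Ico a s)}) :=
  (bddBelow_Icc.mono (sep_subset _ _)).insert b

lemma icoQuantile_mem_Icc (hab : a ≤ b) (c : ℝ≥0∞) : icoQuantile ν a b c ∈ Icc a b :=
  ⟨le_csInf (insert_nonempty _ _) (by rintro s (rfl | hs); exacts [hab, hs.1.1]),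
    csInf_le (bddBelow_icoQuantile_set c) (mem_insert _ _)⟩

lemma icoQuantile_zero (hab : a ≤ b) : icoQuantile ν a b 0 = a :=
  le_antisymm (csInf_le (bddBelow_icoQuantile_set 0)
    (mem_insert_of_mem _ ⟨left_mem_Icc.2 hab, zero_le⟩)) (icoQuantile_mem_Icc hab 0).1

lemma icoQuantile_of_measure_lt {c : ℝ≥0∞} (hc : ν (Ico a b) < c) : icoQuantile ν a b c = b := by
  refine le_antisymm (csInf_le (bddBelow_icoQuantile_set c) (mem_insert _ _))
    (le_csInf (insert_nonempty _ _) ?_)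
  rintro s (rfl | ⟨hs, hcs⟩)
  · exact le_rfl
  · exact absurd (hcs.trans (measure_mono (Ico_subset_Ico_right hs.2))) hc.not_ge

lemma monotone_icoQuantile : Monotone (icoQuantile ν a b) := fun _ _ hcc' =>
  csInf_le_csInf (bddBelow_icoQuantile_set _) (insert_nonempty _ _)
    (insert_subset_insert fun _ ⟨hs, hcs⟩ => ⟨hs, hcc'.trans hcs⟩)

lemma le_measure_Ico_of_icoQuantile_lt {c : ℝ≥0∞} {s : ℝ} (hs : icoQuantile ν a b c < s)
    (hsb : s ≤ b) : c ≤ ν (Ico a s) := by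
  obtain ⟨u, hu, hus⟩ := exists_lt_of_csInf_lt (insert_nonempty _ _) hs
  rcases hu with rfl | ⟨-, hcu⟩
  · exact absurd hsb hus.not_ge
  · exact hcu.trans (measure_mono (Ico_subset_Ico_right hus.le))

lemma measure_Ico_lt_of_lt_icoQuantile {c : ℝ≥0∞} {s : ℝ} (has : a ≤ s)
    (hs : s < icoQuantile ν a b c) : ν (Ico a s) < c := by
  have hsb : s < b := hs.trans_le (csInf_le (bddBelow_icoQuantile_set c) (mem_insert _ _))
  have hns := notMem_of_lt_csInf hs (bddBelow_icoQuantile_set c)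
  simpa only [mem_insert_iff, hsb.ne, mem_ofPred_eq, mem_Icc, has, hsb.le, and_self, true_and,
    false_or, not_le] using hns

lemma measure_Ioo_icoQuantile_le [IsFiniteMeasure ν] (hab : a ≤ b) (c ε : ℝ≥0∞) :
    ν (Ioo (icoQuantile ν a b c) (icoQuantile ν a b (c + ε))) ≤ ε := by
  refine measure_Ioo_le_of_forall_Icc_le fun s r hs hr => ?_
  rcases lt_or_ge r s with hrs | hsr
  · simp [Icc_eq_empty_of_lt hrs]
  obtain ⟨r', hrr', hr'⟩ := exists_between hr
  have has : a ≤ s := (icoQuantile_mem_Icc hab c).1.trans hs.le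
  have hlow : c ≤ ν (Ico a s) := le_measure_Ico_of_icoQuantile_lt hs
    ((hsr.trans_lt (hrr'.trans hr')).le.trans (icoQuantile_mem_Icc hab _).2)
  have hup : ν (Ico a r') < c + ε :=
    measure_Ico_lt_of_lt_icoQuantile (has.trans (hsr.trans hrr'.le)) hr'
  have hsplit : ν (Ico a s) + ν (Ico s r') = ν (Ico a r') := by
    rw [← measure_union Ico_disjoint_Ico_same measurableSet_Ico,
      Ico_union_Ico_eq_Ico has (hsr.trans hrr'.le)]
  have hc : c ≠ ∞ := (hlow.trans_lt (measure_lt_top ν _)).ne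
  calc ν (Icc s r) ≤ ν (Ico s r') := measure_mono (Icc_subset_Ico_right hrr')
    _ ≤ ε := (ENNReal.add_le_add_iff_left hc).1 <| by
      calc c + ν (Ico s r') ≤ ν (Ico a s) + ν (Ico s r') := by gcongr
        _ = ν (Ico a r') := hsplit
        _ ≤ c + ε := hup.le

end IcoQuantile

lemma exists_monotone_measure_Ioo_le (ν : Measure ℝ) [IsFiniteMeasure ν] {a b : ℝ} (hab : a ≤ b)
    {ε : ℝ≥0∞} (hε : ε ≠ 0) :
    ∃ (K : ℕ) (t : ℕ → ℝ), Monotone t ∧ t 0 = a ∧ t K = b ∧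
      ∀ k, ν (Ioo (t k) (t (k + 1))) ≤ ε := by
  obtain ⟨K, hK⟩ := ENNReal.exists_nat_mul_gt hε (measure_ne_top ν (Ico a b))
  refine ⟨K, fun k => icoQuantile ν a b (k * ε),
    monotone_icoQuantile.comp fun k l hkl => by gcongr, by simpa using icoQuantile_zero hab,
    icoQuantile_of_measure_lt hK, fun k => ?_⟩
  simpa [add_mul] using measure_Ioo_icoQuantile_le hab (k * ε) ε

section MonotoneSeq

variable {α : Type*} {t : ℕ → α}

lemma Monotone.Ioo_succ_subset_Ico [Preorder α] (ht : Monotone t) {k K : ℕ} (hk : k < K) :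
    Ioo (t k) (t (k + 1)) ⊆ Ico (t 0) (t K) :=
  fun _ hx => ⟨(ht k.zero_le).trans hx.1.le, hx.2.trans_le (ht hk)⟩

lemma Monotone.notMem_Ioo_succ [Preorder α] (ht : Monotone t) (j k : ℕ) :
    t j ∉ Ioo (t k) (t (k + 1)) := by
  rintro ⟨h₁, h₂⟩
  rcases le_or_gt j k with h | h
  · exact (ht h).not_gt h₁
  · exact (ht h).not_gt h₂

lemma exists_eq_or_mem_Ioo_succ_of_mem_Ico [LinearOrder α] {K : ℕ} {x : α}
    (hx : x ∈ Ico (t 0) (t K)) : (∃ k < K, t k = x) ∨ ∃ k < K, x ∈ Ioo (t k) (t (k + 1)) := by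
  induction K with
  | zero => exact absurd hx.2 hx.1.not_gt
  | succ K ih =>
    rcases lt_or_ge x (t K) with hxK | hKx
    · rcases ih ⟨hx.1, hxK⟩ with ⟨k, hk, h⟩ | ⟨k, hk, h⟩
      exacts [.inl ⟨k, hk.trans K.lt_succ_self, h⟩, .inr ⟨k, hk.trans K.lt_succ_self, h⟩]
    · rcases hKx.eq_or_lt with h | h
      exacts [.inl ⟨K, K.lt_succ_self, h⟩, .inr ⟨K, K.lt_succ_self, h, hx.2⟩]

lemma Ico_subset_filter_union_iUnion_Ioo_succ [LinearOrder α] {K : ℕ} :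
    Ico (t 0) (t K) ⊆
      ↑(((Finset.range K).image t).filter (· < t K)) ∪ ⋃ l : Fin K, Ioo (t l) (t (l + 1)) := by
  intro x hx
  rcases exists_eq_or_mem_Ioo_succ_of_mem_Ico hx with ⟨k, hk, rfl⟩ | ⟨k, hk, hxk⟩
  · exact .inl (Finset.mem_filter.2 ⟨Finset.mem_image_of_mem t (Finset.mem_range.2 hk), hx.2⟩)
  · exact .inr (mem_iUnion.2 ⟨⟨k, hk⟩, hxk⟩)

end MonotoneSeq

lemma sum_sSup_sub_sInf_image_le {ι : Type*} [LinearOrder ι] (T : Finset ι) {I : ι → Set ℝ}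
    {w : ℝ → ℝ} {lo hi : ℝ} (hlohi : lo ≤ hi) (hw : ∀ l ∈ T, ∀ x ∈ I l, w x ∈ Icc lo hi)
    (hmono : ∀ l ∈ T, ∀ l' ∈ T, l < l' → ∀ x ∈ I l, ∀ y ∈ I l', w x ≤ w y) :
    ∑ l ∈ T, (sSup (w '' I l) - sInf (w '' I l)) ≤ hi - lo := by
  classical
  induction T using Finset.induction_on_max generalizing hi with
  | empty => simpa using hlohi
  | insert l T hlT ih =>
    rw [Finset.sum_insert fun h => (hlT l h).false]
    have hwT : ∀ k ∈ T, ∀ x ∈ I k, w x ∈ Icc lo hi := fun k hk => hw k (Finset.mem_insert_of_mem hk)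
    have hmonoT : ∀ k ∈ T, ∀ k' ∈ T, k < k' → ∀ x ∈ I k, ∀ y ∈ I k', w x ≤ w y :=
      fun k hk k' hk' => hmono k (Finset.mem_insert_of_mem hk) k' (Finset.mem_insert_of_mem hk')
    rcases (I l).eq_empty_or_nonempty with hl | hl
    · simpa [hl] using ih hlohi hwT hmonoT
    have hwl : ∀ x ∈ I l, w x ∈ Icc lo hi := hw l (Finset.mem_insert_self l T)
    have hlo : lo ≤ sInf (w '' I l) :=
      le_csInf (hl.image w) (forall_mem_image.2 fun x hx => (hwl x hx).1)
    have hhi : sSup (w '' I l) ≤ hi :=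
      csSup_le (hl.image w) (forall_mem_image.2 fun x hx => (hwl x hx).2)
    have hbelow : ∀ k ∈ T, ∀ x ∈ I k, w x ∈ Icc lo (sInf (w '' I l)) := fun k hk x hx =>
      ⟨(hwT k hk x hx).1, le_csInf (hl.image w) (forall_mem_image.2 fun y hy =>
        hmono k (Finset.mem_insert_of_mem hk) l (Finset.mem_insert_self l T) (hlT k hk) x hx y hy)⟩
    linarith [ih hlo hbelow hmonoT]

lemma setIntegral_le_sum_mul_measureReal {α ι : Type*} [MeasurableSpace α] [Fintype ι]
    {μ : Measure α} [IsFiniteMeasure μ] {s : Set α} {f : α → ℝ} {I : ι → Set α} {c : ι → ℝ}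
    (hs : MeasurableSet s) (hI : ∀ l, MeasurableSet (I l)) (hc : ∀ l, 0 ≤ c l)
    (hf : ∀ x ∈ s, f x ≤ ∑ l, (I l).indicator (fun _ => c l) x) :
    ∫ x in s, f x ∂μ ≤ ∑ l, c l * μ.real (I l) := by
  have hint : ∀ l, Integrable ((I l).indicator fun _ => c l) μ :=
    fun l => (integrable_const (c l)).indicator (hI l)
  by_cases hfs : IntegrableOn f s μ
  · calc ∫ x in s, f x ∂μ ≤ ∫ x in s, ∑ l, (I l).indicator (fun _ => c l) x ∂μ :=
          setIntegral_mono_on hfs (integrable_finsetSum _ fun l _ => hint l).integrableOn hs hf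
      _ ≤ ∫ x, ∑ l, (I l).indicator (fun _ => c l) x ∂μ :=
          setIntegral_le_integral (integrable_finsetSum _ fun l _ => hint l)
            (.of_forall fun x => Finset.sum_nonneg fun l _ => indicator_nonneg (fun _ _ => hc l) x)
      _ = ∑ l, c l * μ.real (I l) := by
          rw [integral_finsetSum _ fun l _ => hint l]
          simp [integral_indicator_const _ (hI _), mul_comm]
  · rw [integral_undef hfs]
    exact Finset.sum_nonneg fun l _ => mul_nonneg (hc l) measureReal_nonneg

lemma setIntegral_abs_sub_le_of_partition {ι : Type*} [Fintype ι] [LinearOrder ι]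
    {ν : Measure ℝ} [IsFiniteMeasure ν] {s P : Set ℝ} {I : ι → Set ℝ} {w wt : ℝ → ℝ}
    {lo hi δ : ℝ} (hs : MeasurableSet s) (hcover : s ⊆ P ∪ ⋃ l, I l) (hIs : ∀ l, I l ⊆ s)
    (hImeas : ∀ l, MeasurableSet (I l)) (hIν : ∀ l, ν.real (I l) ≤ δ)
    (hord : ∀ l l', l < l' → ∀ x ∈ I l, ∀ y ∈ I l', x ≤ y) (hδ : 0 ≤ δ)
    (hw : MonotoneOn w s) (hwlh : ∀ x ∈ s, w x ∈ Icc lo hi) (hlohi : lo ≤ hi)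
    (hP : ∀ x ∈ P, wt x = w x) (hI : ∀ l, ∀ x ∈ I l, wt x = sInf (w '' I l)) :
    ∫ x in s, |w x - wt x| ∂ν ≤ (hi - lo) * δ := by
  set c : ι → ℝ := fun l => sSup (w '' I l) - sInf (w '' I l)
  have hbdd : ∀ l, BddBelow (w '' I l) ∧ BddAbove (w '' I l) := fun l =>
    ⟨⟨lo, forall_mem_image.2 fun x hx => (hwlh x (hIs l hx)).1⟩,
      ⟨hi, forall_mem_image.2 fun x hx => (hwlh x (hIs l hx)).2⟩⟩
  have hc : ∀ l, 0 ≤ c l := fun l => sub_nonneg.2 (Real.sInf_le_sSup _ (hbdd l).1 (hbdd l).2)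
  have hpt : ∀ x ∈ s, |w x - wt x| ≤ ∑ l, (I l).indicator (fun _ => c l) x := by
    intro x hx
    have hsum_nonneg : ∀ l ∈ Finset.univ, 0 ≤ (I l).indicator (fun _ => c l) x :=
      fun l _ => indicator_nonneg (fun _ _ => hc l) x
    rcases hcover hx with hxP | hxI
    · rw [hP x hxP, sub_self, abs_zero]
      exact Finset.sum_nonneg hsum_nonneg
    obtain ⟨l, hxl⟩ := mem_iUnion.1 hxI
    have hinf : sInf (w '' I l) ≤ w x := csInf_le (hbdd l).1 (mem_image_of_mem w hxl)
    have hsup : w x ≤ sSup (w '' I l) := le_csSup (hbdd l).2 (mem_image_of_mem w hxl)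
    calc |w x - wt x| ≤ c l := by
          rw [hI l x hxl, abs_of_nonneg (sub_nonneg.2 hinf)]
          linarith
      _ = (I l).indicator (fun _ => c l) x := (indicator_of_mem hxl (fun _ => c l)).symm
      _ ≤ ∑ l, (I l).indicator (fun _ => c l) x :=
          Finset.single_le_sum hsum_nonneg (Finset.mem_univ l)
  have hosc : ∑ l, c l ≤ hi - lo :=
    sum_sSup_sub_sInf_image_le _ hlohi (fun l _ x hx => hwlh x (hIs l hx))
      fun l _ l' _ hll' x hx y hy => hw (hIs l hx) (hIs l' hy) (hord l l' hll' x hx y hy)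
  calc ∫ x in s, |w x - wt x| ∂ν ≤ ∑ l, c l * ν.real (I l) :=
        setIntegral_le_sum_mul_measureReal hs hImeas hc hpt
    _ ≤ ∑ l, c l * δ := Finset.sum_le_sum fun l _ => mul_le_mul_of_nonneg_left (hIν l) (hc l)
    _ = (∑ l, c l) * δ := (Finset.sum_mul _ _ _).symm
    _ ≤ (hi - lo) * δ := mul_le_mul_of_nonneg_right hosc hδ

/-- **L¹ approximation of monotone functions by functions constant on a fixed partition.**
Let `Tmax > 0`, `δ' > 0` and `ν` a finite Borel measure on `[0, Tmax)`.  There exist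
finitely many points `a₁ < … < a_M` in `[0, Tmax)` and pairwise disjoint intervals
(convex sets) `I₁, …, I_L ⊆ [0, Tmax)`, disjoint from the points, with `ν(I_l) ≤ δ'`,
whose union together with the points is all of `[0, Tmax)`, such that for every `B ≥ 1`
and every non-decreasing `w : [0, Tmax) → [1, B]`, the function `w̃` equal to `w` at each
`a_m` and to `inf_{s ∈ I_l} w(s)` on each `I_l` satisfies `∫ |w − w̃| dν ≤ B·δ'`. -/
theorem stmt_12 (Tmax δ' : ℝ) (hTmax : 0 < Tmax) (hδ' : 0 < δ')
    (ν : Measure ℝ) [IsFiniteMeasure ν] :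
    ∃ (M L : ℕ) (a : Fin M → ℝ) (I : Fin L → Set ℝ),
      StrictMono a ∧ (∀ m, a m ∈ Set.Ico (0 : ℝ) Tmax) ∧
      (∀ l, Convex ℝ (I l) ∧ I l ⊆ Set.Ico (0 : ℝ) Tmax ∧ ν (I l) ≤ ENNReal.ofReal δ') ∧
      (∀ l l', l ≠ l' → Disjoint (I l) (I l')) ∧
      (∀ l m, a m ∉ I l) ∧
      (Set.range a ∪ ⋃ l, I l) = Set.Ico (0 : ℝ) Tmax ∧
      ∀ (B : ℝ), 1 ≤ B → ∀ w : ℝ → ℝ, MonotoneOn w (Set.Ico (0 : ℝ) Tmax) →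
        (∀ t ∈ Set.Ico (0 : ℝ) Tmax, w t ∈ Set.Icc (1 : ℝ) B) →
        ∀ wt : ℝ → ℝ, (∀ m, wt (a m) = w (a m)) →
          (∀ l, ∀ t ∈ I l, wt t = sInf (w '' I l)) →
          ∫ t in Set.Ico (0 : ℝ) Tmax, |w t - wt t| ∂ν ≤ B * δ' := by
  obtain ⟨K, t, ht, ht0, rfl, htν⟩ :=
    exists_monotone_measure_Ioo_le ν hTmax.le (ENNReal.ofReal_pos.2 hδ').ne'
  set S : Finset ℝ := ((Finset.range K).image t).filter (· < t K)
  have hS : ∀ x ∈ S, ∃ k, t k = x ∧ x < t K := fun x hx => by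
    obtain ⟨hmem, hlt⟩ := Finset.mem_filter.1 hx
    obtain ⟨k, -, hk⟩ := Finset.mem_image.1 hmem
    exact ⟨k, hk, hlt⟩
  set I : Fin K → Set ℝ := fun l => Ioo (t l) (t (l + 1))
  have hIsub : ∀ l, I l ⊆ Ico 0 (t K) := fun l => ht0 ▸ ht.Ioo_succ_subset_Ico l.isLt
  have hcover : range (S.orderEmbOfFin rfl) ∪ ⋃ l, I l = Ico 0 (t K) := by
    rw [S.range_orderEmbOfFin]
    refine (union_subset (fun x hx => ?_) (iUnion_subset hIsub)).antisymm
      (ht0 ▸ Ico_subset_filter_union_iUnion_Ioo_succ)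
    obtain ⟨k, rfl, hlt⟩ := hS x hx
    exact ⟨ht0 ▸ ht k.zero_le, hlt⟩
  refine ⟨S.card, K, S.orderEmbOfFin rfl, I, (S.orderEmbOfFin rfl).strictMono,
    fun m => hcover.subset (.inl (mem_range_self m)), fun l => ⟨convex_Ioo _ _, hIsub l, htν l⟩,
    fun l l' h => ht.pairwise_disjoint_on_Ioo_succ (Fin.val_injective.ne h),
    fun l m => (hS _ (S.orderEmbOfFin_mem rfl m)).elim fun k hk => hk.1 ▸ ht.notMem_Ioo_succ k l,
    hcover, fun B hB w hw hwB wt hwa hwI => ?_⟩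
  calc ∫ x in Ico 0 (t K), |w x - wt x| ∂ν ≤ (B - 1) * δ' :=
        setIntegral_abs_sub_le_of_partition measurableSet_Ico hcover.symm.subset hIsub
          (fun _ => measurableSet_Ioo) (fun l => ENNReal.toReal_le_of_le_ofReal hδ'.le (htν l))
          (fun l l' h x hx y hy => (hx.2.trans_le (ht (Nat.succ_le_of_lt h))).le.trans hy.1.le)
          hδ'.le hw hwB hB (by rintro _ ⟨m, rfl⟩; exact hwa m) hwI
    _ ≤ B * δ' := by linarith
end
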